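/- arXiv:2604.22357 — 9 statements merged into one kernel-verified Lean document; each statement's English description precedes it below -/
import Mathlib

section
/- The closed conflict-free chromatic index of the 5-cycle C₅ equals 2, while its open conflict-free chromatic index equals 3. -/
open SimpleGraph

/-- The closed neighbourhood of an edge `e`: all edges of `G` sharing a vertex with `e`. -/
def ECN {V : Type*} (G : SimpleGraph V) (e : Sym2 V) : Set (Sym2 V) :=
  {f | f ∈ G.edgeSet ∧ ∃ w, w ∈ f ∧ w ∈ e}

/-- The open neighbourhood of an edge `e`. -/
def EON {V : Type*} (G : SimpleGraph V) (e : Sym2 V) : Set (Sym2 V) :=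
  ECN G e \ {e}

/-- `c` is a closed conflict-free edge colouring of `G` with `k` colours. -/
def ClosedCF {V : Type*} (G : SimpleGraph V) (c : Sym2 V → ℕ) (k : ℕ) : Prop :=
  (∀ e ∈ G.edgeSet, c e < k) ∧
  ∀ e ∈ G.edgeSet, ∃ α, ∃! f, f ∈ ECN G e ∧ c f = α

/-- `c` is an open conflict-free edge colouring of `G` with `k` colours. -/
def OpenCF {V : Type*} (G : SimpleGraph V) (c : Sym2 V → ℕ) (k : ℕ) : Prop :=
  (∀ e ∈ G.edgeSet, c e < k) ∧
  ∀ e ∈ G.edgeSet, (EON G e).Nonempty → ∃ α, ∃! f, f ∈ EON G e ∧ c f = α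

/-- `c` is a conflict-free edge colouring of `G` with `k` colours:
every non-isolated edge `e` has an edge `e'` in its open neighbourhood whose
colour appears on no other edge of the closed neighbourhood of `e`. -/
def ConflictFree {V : Type*} (G : SimpleGraph V) (c : Sym2 V → ℕ) (k : ℕ) : Prop :=
  (∀ e ∈ G.edgeSet, c e < k) ∧
  ∀ e ∈ G.edgeSet, (EON G e).Nonempty →
    ∃ e' ∈ EON G e, ∀ f ∈ ECN G e, c f = c e' → f = e'

/-- A partial edge colouring of `G` with `k` colours. -/
def PartialColouring {V : Type*} (G : SimpleGraph V) (c : Sym2 V → Option ℕ) (k : ℕ) : Prop :=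
  ∀ e α, c e = some α → e ∈ G.edgeSet ∧ α < k

/-- An edge `e` is satisfied by the partial colouring `c`. -/
def SatisfiedP {V : Type*} (G : SimpleGraph V) (c : Sym2 V → Option ℕ) (e : Sym2 V) : Prop :=
  ∃ e' ∈ EON G e, ∃ α, c e' = some α ∧ ∀ f ∈ ECN G e, c f = some α → f = e'

/-- Vertex `v` is incident with a uniquely coloured edge under partial colouring `c`. -/
def UniqueAt {V : Type*} (G : SimpleGraph V) (c : Sym2 V → Option ℕ) (v : V) : Prop :=
  ∃ e ∈ G.incidenceSet v, ∃ α, c e = some α ∧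
    ∀ f ∈ G.incidenceSet v, c f = some α → f = e

/-- `G` is `k`-degenerate: there is a vertex ordering in which every vertex
has at most `k` earlier neighbours. -/
def IsDegenerate {V : Type*} (G : SimpleGraph V) (k : ℕ) : Prop :=
  ∃ f : V ↪ ℕ, ∀ v, {u ∈ G.neighborSet v | f u < f v}.ncard ≤ k

/-- The open conflict-free chromatic index. -/
noncomputable def ocfIndex {V : Type*} (G : SimpleGraph V) : ℕ :=
  sInf {k | ∃ c, OpenCF G c k}

/-- The closed conflict-free chromatic index. -/
noncomputable def ccfIndex {V : Type*} (G : SimpleGraph V) : ℕ :=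
  sInf {k | ∃ c, ClosedCF G c k}

/-- The conflict-free chromatic index. -/
noncomputable def cfIndex {V : Type*} (G : SimpleGraph V) : ℕ :=
  sInf {k | ∃ c, ConflictFree G c k}


/-! ### Auxiliary material for `stmt0` -/

instance instDecECN5 (e f : Sym2 (Fin 5)) : Decidable (f ∈ ECN (cycleGraph 5) e) :=
  decidable_of_iff (f ∈ (cycleGraph 5).edgeSet ∧ ∃ w, w ∈ f ∧ w ∈ e) Iff.rfl

instance instDecEON5 (e f : Sym2 (Fin 5)) : Decidable (f ∈ EON (cycleGraph 5) e) :=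
  decidable_of_iff (f ∈ ECN (cycleGraph 5) e ∧ ¬ f = e) Iff.rfl

/-- Closed CF colouring of C₅ with 2 colours. -/
def cTwo : Sym2 (Fin 5) → ℕ := fun f => if f = s(2,3) ∨ f = s(4,0) then 1 else 0

/-- Open CF colouring of C₅ with 3 colours. -/
def cThree : Sym2 (Fin 5) → ℕ :=
  fun f => if f = s(1,2) ∨ f = s(2,3) then 1 else if f = s(3,4) then 2 else 0

lemma closedCF_two : ClosedCF (cycleGraph 5) cTwo 2 := by
  constructor
  · intro e _; unfold cTwo; split <;> omega
  · intro e he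
    have h : ∀ e : Sym2 (Fin 5), e ∈ (cycleGraph 5).edgeSet →
        (∃ f, (f ∈ ECN (cycleGraph 5) e ∧ cTwo f = 0) ∧
          ∀ g, (g ∈ ECN (cycleGraph 5) e ∧ cTwo g = 0) → g = f) ∨
        (∃ f, (f ∈ ECN (cycleGraph 5) e ∧ cTwo f = 1) ∧
          ∀ g, (g ∈ ECN (cycleGraph 5) e ∧ cTwo g = 1) → g = f) := by decide
    rcases h e he with ⟨f, hf, hu⟩ | ⟨f, hf, hu⟩
    · exact ⟨0, f, hf, hu⟩
    · exact ⟨1, f, hf, hu⟩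

lemma openCF_three : OpenCF (cycleGraph 5) cThree 3 := by
  constructor
  · intro e _; unfold cThree; split
    · omega
    · split <;> omega
  · intro e he _
    have h : ∀ e : Sym2 (Fin 5), e ∈ (cycleGraph 5).edgeSet →
        (∃ f, (f ∈ EON (cycleGraph 5) e ∧ cThree f = 0) ∧
          ∀ g, (g ∈ EON (cycleGraph 5) e ∧ cThree g = 0) → g = f) ∨
        (∃ f, (f ∈ EON (cycleGraph 5) e ∧ cThree f = 1) ∧
          ∀ g, (g ∈ EON (cycleGraph 5) e ∧ cThree g = 1) → g = f) ∨
        (∃ f, (f ∈ EON (cycleGraph 5) e ∧ cThree f = 2) ∧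
          ∀ g, (g ∈ EON (cycleGraph 5) e ∧ cThree g = 2) → g = f) := by decide
    rcases h e he with ⟨f, hf, hu⟩ | ⟨f, hf, hu⟩ | ⟨f, hf, hu⟩
    · exact ⟨0, f, hf, hu⟩
    · exact ⟨1, f, hf, hu⟩
    · exact ⟨2, f, hf, hu⟩

lemma open_pair_ne {c : Sym2 (Fin 5) → ℕ} {k : ℕ} (h : OpenCF (cycleGraph 5) c k)
    (e a b : Sym2 (Fin 5)) (he : e ∈ (cycleGraph 5).edgeSet)
    (ha : a ∈ EON (cycleGraph 5) e) (hb : b ∈ EON (cycleGraph 5) e) (hab : a ≠ b)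
    (hsub : ∀ f ∈ EON (cycleGraph 5) e, f = a ∨ f = b) : c a ≠ c b := by
  intro hcab
  obtain ⟨α, f, ⟨hf, hfα⟩, hu⟩ := h.2 e he ⟨a, ha⟩
  rcases hsub f hf with rfl | rfl
  · exact hab (hu b ⟨hb, by rw [← hcab, hfα]⟩).symm
  · exact hab (hu a ⟨ha, by rw [hcab, hfα]⟩)

theorem stmt0 :
    IsLeast {k | ∃ c : Sym2 (Fin 5) → ℕ, ClosedCF (cycleGraph 5) c k} 2 ∧
    IsLeast {k | ∃ c : Sym2 (Fin 5) → ℕ, OpenCF (cycleGraph 5) c k} 3 := by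
  constructor
  · constructor
    · exact ⟨cTwo, closedCF_two⟩
    · rintro k ⟨c, hc⟩
      by_contra hlt
      push_neg at hlt
      have h01 : s((0:Fin 5),1) ∈ (cycleGraph 5).edgeSet := by decide
      have h12 : s((1:Fin 5),2) ∈ (cycleGraph 5).edgeSet := by decide
      have hb1 := hc.1 _ h01
      have hb2 := hc.1 _ h12
      obtain ⟨α, f, ⟨hf, hfα⟩, hu⟩ := hc.2 s(0,1) h01
      have hbf := hc.1 f hf.1
      have e1 : s((0:Fin 5),1) = f := hu _ ⟨by decide, by omega⟩
      have e2 : s((1:Fin 5),2) = f := hu _ ⟨by decide, by omega⟩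
      exact (by decide : s((0:Fin 5),1) ≠ s(1,2)) (e1.trans e2.symm)
  · constructor
    · exact ⟨cThree, openCF_three⟩
    · rintro k ⟨c, hc⟩
      by_contra hlt
      push_neg at hlt
      have h0 : s((0:Fin 5),1) ∈ (cycleGraph 5).edgeSet := by decide
      have h1 : s((1:Fin 5),2) ∈ (cycleGraph 5).edgeSet := by decide
      have h2 : s((2:Fin 5),3) ∈ (cycleGraph 5).edgeSet := by decide
      have h3 : s((3:Fin 5),4) ∈ (cycleGraph 5).edgeSet := by decide
      have h4 : s((4:Fin 5),0) ∈ (cycleGraph 5).edgeSet := by decide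
      have b0 := hc.1 _ h0
      have b1 := hc.1 _ h1
      have b2 := hc.1 _ h2
      have b3 := hc.1 _ h3
      have b4 := hc.1 _ h4
      have d0 := open_pair_ne hc s(0,1) s(4,0) s(1,2) h0 (by decide) (by decide)
        (by decide) (by decide)
      have d1 := open_pair_ne hc s(1,2) s(0,1) s(2,3) h1 (by decide) (by decide)
        (by decide) (by decide)
      have d2 := open_pair_ne hc s(2,3) s(1,2) s(3,4) h2 (by decide) (by decide)
        (by decide) (by decide)
      have d3 := open_pair_ne hc s(3,4) s(2,3) s(4,0) h3 (by decide) (by decide)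
        (by decide) (by decide)
      have d4 := open_pair_ne hc s(4,0) s(3,4) s(0,1) h4 (by decide) (by decide)
        (by decide) (by decide)
      omega
end

section
/- Let C₅⁺ denote the 5-cycle with one chord added. Then χ'_ccf(C₅⁺) = 3 and χ'_ocf(C₅⁺) = 2. -/
open SimpleGraph

/-- The 5-cycle with one chord added: the cycle on `ZMod 5` plus the chord `{0, 2}`. -/
def C5plus : SimpleGraph (ZMod 5) :=
  SimpleGraph.fromRel (fun i j => j = i + 1 ∨ (i = 0 ∧ j = 2))

instance : DecidableRel C5plus.Adj := fun a b =>
  decidable_of_iff (a ≠ b ∧ ((b = a + 1 ∨ (a = 0 ∧ b = 2)) ∨ (a = b + 1 ∨ (b = 0 ∧ a = 2))))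
    Iff.rfl

instance (e f : Sym2 (ZMod 5)) : Decidable (f ∈ ECN C5plus e) :=
  decidable_of_iff (f ∈ C5plus.edgeSet ∧ ∃ w, w ∈ f ∧ w ∈ e) Iff.rfl

instance (e f : Sym2 (ZMod 5)) : Decidable (f ∈ EON C5plus e) :=
  decidable_of_iff (f ∈ ECN C5plus e ∧ ¬ f = e) Iff.rfl

/-- the six edges -/
lemma edge_list : ∀ f ∈ C5plus.edgeSet,
    f = s(0,1) ∨ f = s(1,2) ∨ f = s(2,3) ∨ f = s(3,4) ∨ f = s(4,0) ∨ f = s(0,2) := by decide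

def col (a b c d e x : Fin 2) : Sym2 (ZMod 5) → Fin 2 := fun f =>
  if f = s(0,1) then a else if f = s(1,2) then b else if f = s(2,3) then c
  else if f = s(3,4) then d else if f = s(4,0) then e else if f = s(0,2) then x else 0

lemma col_eval : ∀ a b c d e x : Fin 2,
    col a b c d e x s(0,1) = a ∧ col a b c d e x s(1,2) = b ∧ col a b c d e x s(2,3) = c ∧
    col a b c d e x s(3,4) = d ∧ col a b c d e x s(4,0) = e ∧ col a b c d e x s(0,2) = x := by
  decide

set_option maxHeartbeats 4000000 in
lemma key_closed : ∀ a b c d e x : Fin 2,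
    ¬ (∀ e' ∈ C5plus.edgeSet, ∃ α : Fin 2, ∃ f, (f ∈ ECN C5plus e' ∧ col a b c d e x f = α)
        ∧ ∀ g, (g ∈ ECN C5plus e' ∧ col a b c d e x g = α) → g = f) := by
  decide

def ccol : Sym2 (ZMod 5) → ℕ := fun f =>
  if f = s(1,2) ∨ f = s(3,4) then 1 else if f = s(0,2) then 2 else 0

def ocol : Sym2 (ZMod 5) → ℕ := fun f =>
  if f = s(4,0) ∨ f = s(0,2) then 1 else 0

lemma ccol_works : ClosedCF C5plus ccol 3 := by
  constructor
  · have : ∀ e ∈ C5plus.edgeSet, ccol e < 3 := by decide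
    exact this
  · have h : ∀ e ∈ C5plus.edgeSet, ∃ α : Fin 3, ∃ f,
        (f ∈ ECN C5plus e ∧ ccol f = (α : ℕ)) ∧
        ∀ g, (g ∈ ECN C5plus e ∧ ccol g = (α : ℕ)) → g = f := by decide
    intro e he
    obtain ⟨α, f, hf, hu⟩ := h e he
    exact ⟨(α : ℕ), f, hf, hu⟩

lemma ocol_works : OpenCF C5plus ocol 2 := by
  constructor
  · have : ∀ e ∈ C5plus.edgeSet, ocol e < 2 := by decide
    exact this
  · have h : ∀ e ∈ C5plus.edgeSet, ∃ α : Fin 2, ∃ f,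
        (f ∈ EON C5plus e ∧ ocol f = (α : ℕ)) ∧
        ∀ g, (g ∈ EON C5plus e ∧ ocol g = (α : ℕ)) → g = f := by decide
    intro e he _
    obtain ⟨α, f, hf, hu⟩ := h e he
    exact ⟨(α : ℕ), f, hf, hu⟩

lemma toFin2_inj : ∀ m n : ℕ, m < 2 → n < 2 →
    ((if m = 0 then (0 : Fin 2) else 1) = (if n = 0 then 0 else 1)) → m = n := by
  intro m n hm hn h
  interval_cases m <;> interval_cases n <;> simp_all

theorem stmt1 :
    IsLeast {k | ∃ c : Sym2 (ZMod 5) → ℕ, ClosedCF C5plus c k} 3 ∧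
    IsLeast {k | ∃ c : Sym2 (ZMod 5) → ℕ, OpenCF C5plus c k} 2 := by
  constructor
  · constructor
    · exact ⟨ccol, ccol_works⟩
    · rintro k ⟨c, hbd, hcf⟩
      by_contra hk
      push_neg at hk
      have hlt : ∀ e ∈ C5plus.edgeSet, c e < 2 := fun e he => lt_of_lt_of_le (hbd e he) (by omega)
      set c' : Sym2 (ZMod 5) → Fin 2 := fun f => if c f = 0 then 0 else 1 with hc'
      have hH : ∀ e' ∈ C5plus.edgeSet, ∃ α : Fin 2, ∃ f, (f ∈ ECN C5plus e' ∧ c' f = α)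
          ∧ ∀ g, (g ∈ ECN C5plus e' ∧ c' g = α) → g = f := by
        intro e' he'
        obtain ⟨α, f, ⟨hfE, hfα⟩, hu⟩ := hcf e' he'
        refine ⟨c' f, f, ⟨hfE, rfl⟩, ?_⟩
        rintro g ⟨hgE, hgα⟩
        have hgf : c g = c f := toFin2_inj _ _ (hlt g hgE.1) (hlt f hfE.1) hgα
        exact hu g ⟨hgE, hgf.trans hfα⟩
      -- replace c' by col of its values on the six edges
      obtain ⟨h01, h12, h23, h34, h40, h02⟩ :=
        col_eval (c' s(0,1)) (c' s(1,2)) (c' s(2,3)) (c' s(3,4)) (c' s(4,0)) (c' s(0,2))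
      have agree : ∀ f ∈ C5plus.edgeSet,
          c' f = col (c' s(0,1)) (c' s(1,2)) (c' s(2,3)) (c' s(3,4)) (c' s(4,0)) (c' s(0,2)) f := by
        intro f hf
        rcases edge_list f hf with rfl | rfl | rfl | rfl | rfl | rfl <;>
          simp only [h01, h12, h23, h34, h40, h02]
      refine key_closed (c' s(0,1)) (c' s(1,2)) (c' s(2,3)) (c' s(3,4)) (c' s(4,0)) (c' s(0,2)) ?_
      intro e' he'
      obtain ⟨α, f, ⟨hfE, hfα⟩, hu⟩ := hH e' he'
      refine ⟨α, f, ⟨hfE, (agree f hfE.1).symm.trans hfα⟩, ?_⟩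
      rintro g ⟨hgE, hgα⟩
      exact hu g ⟨hgE, (agree g hgE.1).trans hgα⟩
  · constructor
    · exact ⟨ocol, ocol_works⟩
    · rintro k ⟨c, hbd, hcf⟩
      by_contra hk
      push_neg at hk
      have hlt : ∀ e ∈ C5plus.edgeSet, c e = 0 := by
        intro e he
        have := hbd e he
        omega
      have h34 : s(3,4) ∈ C5plus.edgeSet := by decide
      have h23 : s(2,3) ∈ EON C5plus s(3,4) := by decide
      have h40 : s(4,0) ∈ EON C5plus s(3,4) := by decide
      obtain ⟨α, f, ⟨hfE, hfα⟩, hu⟩ := hcf s(3,4) h34 ⟨s(2,3), h23⟩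
      have hα : α = 0 := by rw [← hfα]; exact hlt f hfE.1.1
      have e1 : s(2,3) = f := hu _ ⟨h23, by rw [hlt s(2,3) h23.1.1, hα]⟩
      have e2 : s(4,0) = f := hu _ ⟨h40, by rw [hlt s(4,0) h40.1.1, hα]⟩
      have : s((2:ZMod 5),(3:ZMod 5)) = s((4:ZMod 5),(0:ZMod 5)) := e1.trans e2.symm
      exact absurd this (by decide)
end

section
/- Every connected bipartite graph G with vertex bipartition X ∪ Y having at least two edges, which is not a star centered at a vertex of Y, has a subgraph H covering Y (i.e., every vertex of Y has degree at least 1 in H) such that every connected component of H is either a star with at least two edges centered at a vertex of X, or a subdivided star with at least four edges centered at a vertex of Y. -/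
/-!
As `G` is not a star centred in `Y`, the side `Y` has two vertices. Root a BFS tree of `G` at one
of them, `r`, and peel pendant pieces off its bottom; leaves outside `Y` may simply be discarded.
Let `x ∉ Y` be as deep as possible, so that its children are leaves in `Y`. If some such `x` has
two or more children, `x` and its children form a star. Otherwise each of them has exactly one
child, and the parent `c` of `x` with its children and grandchildren forms a subdivided star (a star
centred at `x` when `x` is the only child of `c`). What remains is again a subtree, and induction
applies as long as it contains a vertex of `Y` other than `r`. If it does not, `r` is absorbed into
the last piece: as an extra leaf of the star, or through the extra branch `c - parent c - r` of the
subdivided star.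
-/

open SimpleGraph

/-- The connected component (with vertex set `s`) of `H` containing `x` is a
nontrivial star centered at `x`. -/
def IsNontrivialStarComp {V : Type*} (H : SimpleGraph V) (s : Set V) (x : V) : Prop :=
  x ∈ s ∧ 2 ≤ (H.neighborSet x).ncard ∧ ∀ v ∈ s, v ≠ x → H.neighborSet v = {x}

/-- The connected component (with vertex set `s`) of `H` containing `y` is a
nontrivial subdivided star centered at `y`. -/
def IsNontrivialSubdividedStarComp {V : Type*} (H : SimpleGraph V) (s : Set V) (y : V) : Prop :=
  y ∈ s ∧ 2 ≤ (H.neighborSet y).ncard ∧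
  (∀ u, H.Adj y u → ∃ l, l ≠ y ∧ H.neighborSet u = {y, l} ∧ H.neighborSet l = {u}) ∧
  ∀ v ∈ s, v = y ∨ H.Adj y v ∨ ∃ u, H.Adj y u ∧ H.Adj u v

namespace SimpleGraph

variable {V : Type*} {Y : Set V} {G H H₁ H₂ : SimpleGraph V} {u v x y c l : V}
  {A B L : Set V} {leaf : V → V}

def IsStarAt (H : SimpleGraph V) (x : V) : Prop :=
  2 ≤ (H.neighborSet x).ncard ∧ ∀ v, H.Adj x v → H.neighborSet v = {x}

def IsSubdividedStarAt (H : SimpleGraph V) (y : V) : Prop :=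
  2 ≤ (H.neighborSet y).ncard ∧
    ∀ u, H.Adj y u → ∃ l, l ≠ y ∧ H.neighborSet u = {y, l} ∧ H.neighborSet l = {u}

def NearCenter (H : SimpleGraph V) (Y : Set V) (v : V) : Prop :=
  (∃ x ∉ Y, H.IsStarAt x ∧ (v = x ∨ H.Adj x v)) ∨
    (∃ y ∈ Y, H.IsSubdividedStarAt y ∧ (v = y ∨ H.Adj y v ∨ ∃ u, H.Adj y u ∧ H.Adj u v))

/-- A local form of the component condition of the theorem which, unlike the latter, survives
vertex-disjoint unions. -/
def IsStarForest (H : SimpleGraph V) (Y : Set V) : Prop :=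
  ∀ v ∈ H.support, H.NearCenter Y v

lemma Reachable.mem_of_adj_closed {A : Set V} (hA : ∀ a ∈ A, ∀ b, H.Adj a b → b ∈ A)
    (h : H.Reachable u v) (hu : u ∈ A) : v ∈ A := by
  obtain ⟨p⟩ := h
  induction p with
  | nil => exact hu
  | cons hadj _ ih => exact ih (hA _ hu _ hadj)

lemma ConnectedComponent.supp_subset_of_adj_closed {C : H.ConnectedComponent} {A : Set V}
    (hA : ∀ a ∈ A, ∀ b, H.Adj a b → b ∈ A) (hu : u ∈ C.supp) (huA : u ∈ A) : C.supp ⊆ A :=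
  fun _ hv => Reachable.mem_of_adj_closed hA (C.reachable_of_mem_supp hu hv) huA

lemma ConnectedComponent.mem_supp_of_reachable {C : H.ConnectedComponent} (h : H.Reachable u v)
    (hv : v ∈ C.supp) : u ∈ C.supp :=
  (ConnectedComponent.sound h).trans hv

lemma Adj.mem_of_neighborSet_eq {a b : V} {s : Set V} (h : H.neighborSet a = s)
    (hab : H.Adj a b) : b ∈ s :=
  h ▸ hab

lemma IsStarAt.isNontrivialStarComp (h : H.IsStarAt x) {C : H.ConnectedComponent}
    (hx : x ∈ C.supp) : IsNontrivialStarComp H C.supp x := by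
  obtain ⟨hcard, hleaf⟩ := h
  have hsupp : C.supp ⊆ insert x (H.neighborSet x) := by
    refine ConnectedComponent.supp_subset_of_adj_closed ?_ hx (Set.mem_insert x _)
    rintro a (rfl | ha) b hab
    · exact Or.inr hab
    · exact Or.inl (Set.mem_singleton_iff.1 (hab.mem_of_neighborSet_eq (hleaf a ha)))
  exact ⟨hx, hcard, fun v hv hvx => hleaf v ((hsupp hv).resolve_left hvx)⟩

lemma IsSubdividedStarAt.isNontrivialSubdividedStarComp (h : H.IsSubdividedStarAt y)
    {C : H.ConnectedComponent} (hy : y ∈ C.supp) :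
    IsNontrivialSubdividedStarComp H C.supp y := by
  obtain ⟨hcard, hbranch⟩ := h
  refine ⟨hy, hcard, hbranch, ConnectedComponent.supp_subset_of_adj_closed ?_ hy (Or.inl rfl)⟩
  rintro a (rfl | hya | ⟨u, hyu, hua⟩) b hab
  · exact Or.inr (Or.inl hab)
  · obtain ⟨l, -, hNa, -⟩ := hbranch a hya
    rcases hab.mem_of_neighborSet_eq hNa with rfl | rfl
    · exact Or.inl rfl
    · exact Or.inr (Or.inr ⟨a, hya, hab⟩)
  · obtain ⟨l, -, hNu, hNl⟩ := hbranch u hyu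
    rcases hua.mem_of_neighborSet_eq hNu with rfl | rfl
    · exact Or.inr (Or.inl hab)
    · rw [hab.mem_of_neighborSet_eq hNl]
      exact Or.inr (Or.inl hyu)

theorem IsStarForest.connectedComponent (hH : H.IsStarForest Y) (C : H.ConnectedComponent)
    (hC : ∃ v ∈ C.supp, (H.neighborSet v).Nonempty) :
    (∃ x ∈ Yᶜ, IsNontrivialStarComp H C.supp x) ∨
      (∃ y ∈ Y, IsNontrivialSubdividedStarComp H C.supp y) := by
  obtain ⟨v, hvC, hv⟩ := hC
  rcases hH v hv with ⟨x, hxY, hx, hxv⟩ | ⟨y, hyY, hy, hyv⟩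
  · have hxv : H.Reachable x v := by
      rcases hxv with rfl | hxv
      exacts [Reachable.rfl, hxv.reachable]
    exact Or.inl ⟨x, hxY,
      hx.isNontrivialStarComp (ConnectedComponent.mem_supp_of_reachable hxv hvC)⟩
  · have hyv : H.Reachable y v := by
      rcases hyv with rfl | hyv | ⟨u, hyu, huv⟩
      exacts [Reachable.rfl, hyv.reachable, hyu.reachable.trans huv.reachable]
    exact Or.inr ⟨y, hyY, hy.isNontrivialSubdividedStarComp
      (ConnectedComponent.mem_supp_of_reachable hyv hvC)⟩

lemma IsStarAt.of_neighborSet_eq (h : H₁.IsStarAt x)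
    (hN : ∀ w ∈ H₁.support, H.neighborSet w = H₁.neighborSet w) : H.IsStarAt x := by
  obtain ⟨hcard, hleaf⟩ := h
  have hx : x ∈ H₁.support := Set.nonempty_of_ncard_ne_zero (s := H₁.neighborSet x) (by omega)
  refine ⟨hN x hx ▸ hcard, fun v hv => ?_⟩
  have hv : H₁.Adj x v := hv.mem_of_neighborSet_eq (hN x hx)
  rw [hN v hv.symm.mem_support_left, hleaf v hv]

lemma IsSubdividedStarAt.of_neighborSet_eq (h : H₁.IsSubdividedStarAt y)
    (hN : ∀ w ∈ H₁.support, H.neighborSet w = H₁.neighborSet w) :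
    H.IsSubdividedStarAt y := by
  obtain ⟨hcard, hbranch⟩ := h
  have hy : y ∈ H₁.support := Set.nonempty_of_ncard_ne_zero (s := H₁.neighborSet y) (by omega)
  refine ⟨hN y hy ▸ hcard, fun u hu => ?_⟩
  have hu : H₁.Adj y u := hu.mem_of_neighborSet_eq (hN y hy)
  obtain ⟨l, hly, hNu, hNl⟩ := hbranch u hu
  have hl : l ∈ H₁.support := ⟨u, (hNl ▸ Set.mem_singleton u : u ∈ H₁.neighborSet l)⟩
  exact ⟨l, hly, hN u hu.symm.mem_support_left ▸ hNu, hN l hl ▸ hNl⟩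

lemma NearCenter.of_neighborSet_eq (h : H₁.NearCenter Y v)
    (hN : ∀ w ∈ H₁.support, H.neighborSet w = H₁.neighborSet w) : H.NearCenter Y v := by
  have hadj : ∀ {a b}, H₁.Adj a b → H.Adj a b := fun hab =>
    ((hN _ hab.mem_support_left).symm ▸ hab : _ ∈ H.neighborSet _)
  rcases h with ⟨x, hxY, hx, hxv⟩ | ⟨y, hyY, hy, hyv⟩
  · exact Or.inl ⟨x, hxY, hx.of_neighborSet_eq hN, hxv.imp_right hadj⟩
  · refine Or.inr ⟨y, hyY, hy.of_neighborSet_eq hN, ?_⟩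
    exact hyv.imp_right (Or.imp hadj fun ⟨u, hyu, huv⟩ => ⟨u, hadj hyu, hadj huv⟩)

lemma neighborSet_sup_of_notMem_support (h : v ∉ H₂.support) :
    (H₁ ⊔ H₂).neighborSet v = H₁.neighborSet v := by
  rw [neighborSet_sup, Set.union_eq_left]
  exact fun w hw => absurd hw.mem_support_left h

lemma IsStarForest.sup (h₁ : H₁.IsStarForest Y) (h₂ : H₂.IsStarForest Y)
    (hdisj : Disjoint H₁.support H₂.support) : (H₁ ⊔ H₂).IsStarForest Y := by
  rintro v ⟨w, hw | hw⟩
  · refine (h₁ v hw.mem_support_left).of_neighborSet_eq fun u hu => ?_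
    exact neighborSet_sup_of_notMem_support (hdisj.notMem_of_mem_left hu)
  · refine (h₂ v hw.mem_support_left).of_neighborSet_eq fun u hu => ?_
    rw [sup_comm]
    exact neighborSet_sup_of_notMem_support (hdisj.notMem_of_mem_right hu)

structure IsStarCover (G : SimpleGraph V) (Y S : Set V) (H : SimpleGraph V) : Prop where
  le : H ≤ G
  support_subset : H.support ⊆ S
  subset_support : S ∩ Y ⊆ H.support
  isStarForest : H.IsStarForest Y

lemma IsStarCover.mono (h : G.IsStarCover Y A H) (hAB : A ⊆ B) (hBA : B ∩ Y ⊆ A) :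
    G.IsStarCover Y B H :=
  ⟨h.le, h.support_subset.trans hAB, fun _ hv => h.subset_support ⟨hBA hv, hv.2⟩,
    h.isStarForest⟩

lemma IsStarCover.sup (h₁ : G.IsStarCover Y A H₁) (h₂ : G.IsStarCover Y B H₂)
    (hAB : Disjoint A B) : G.IsStarCover Y (A ∪ B) (H₁ ⊔ H₂) where
  le := sup_le h₁.le h₂.le
  support_subset := by
    rintro _ ⟨w, hw | hw⟩
    exacts [Or.inl (h₁.support_subset hw.mem_support_left),
      Or.inr (h₂.support_subset hw.mem_support_left)]
  subset_support := by
    rintro v ⟨hv | hv, hvY⟩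
    · exact support_mono le_sup_left (h₁.subset_support ⟨hv, hvY⟩)
    · exact support_mono le_sup_right (h₂.subset_support ⟨hv, hvY⟩)
  isStarForest := h₁.isStarForest.sup h₂.isStarForest
    (hAB.mono h₁.support_subset h₂.support_subset)

def starOn (x : V) (L : Set V) : SimpleGraph V :=
  fromRel fun a b => a = x ∧ b ∈ L

lemma neighborSet_starOn_self (hx : x ∉ L) : (starOn x L).neighborSet x = L := by
  ext b
  simp only [starOn, mem_neighborSet, fromRel_adj]
  grind

lemma neighborSet_starOn_of_mem (hx : x ∉ L) (hl : l ∈ L) :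
    (starOn x L).neighborSet l = {x} := by
  ext b
  simp only [starOn, mem_neighborSet, fromRel_adj, Set.mem_singleton_iff]
  grind

lemma support_starOn_subset : (starOn x L).support ⊆ insert x L := by
  rintro a ⟨b, hab⟩
  simp only [starOn, fromRel_adj] at hab
  grind

lemma isStarCover_starOn (hx : x ∉ Y) (hLY : L ⊆ Y) (hL : 2 ≤ L.ncard)
    (hadj : ∀ l ∈ L, G.Adj x l) : G.IsStarCover Y (insert x L) (starOn x L) := by
  have hxL : x ∉ L := fun h => hx (hLY h)
  have hadj' : ∀ l ∈ L, (starOn x L).Adj x l := fun l hl =>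
    ((neighborSet_starOn_self hxL).symm ▸ hl : l ∈ (starOn x L).neighborSet x)
  have hstar : (starOn x L).IsStarAt x := by
    refine ⟨(neighborSet_starOn_self hxL).symm ▸ hL, fun v hv => ?_⟩
    exact neighborSet_starOn_of_mem hxL (hv.mem_of_neighborSet_eq (neighborSet_starOn_self hxL))
  refine ⟨?_, support_starOn_subset, ?_, ?_⟩
  · intro a b hab
    simp only [starOn, fromRel_adj] at hab
    obtain ⟨-, ⟨rfl, hb⟩ | ⟨rfl, ha⟩⟩ := hab
    exacts [hadj b hb, (hadj a ha).symm]
  · rintro v ⟨rfl | hv, hvY⟩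
    · exact absurd hvY hx
    · exact ⟨x, (hadj' v hv).symm⟩
  · intro v hv
    refine Or.inl ⟨x, hx, hstar, ?_⟩
    exact (support_starOn_subset hv).imp_right (hadj' v)

def subdividedStarOn (c : V) (B : Set V) (leaf : V → V) : SimpleGraph V :=
  fromRel fun a b => (a = c ∧ b ∈ B) ∨ (a ∈ B ∧ b = leaf a)

structure IsSubdividedStarShape (Y : Set V) (c : V) (B : Set V) (leaf : V → V) : Prop where
  center_mem : c ∈ Y
  notMem_of_mem : ∀ u ∈ B, u ∉ Y
  leaf_mem : ∀ u ∈ B, leaf u ∈ Y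
  leaf_ne_center : ∀ u ∈ B, leaf u ≠ c
  injOn_leaf : Set.InjOn leaf B

lemma support_subdividedStarOn_subset :
    (subdividedStarOn c B leaf).support ⊆ insert c (B ∪ leaf '' B) := by
  rintro a ⟨b, hab⟩
  simp only [subdividedStarOn, fromRel_adj] at hab
  grind

namespace IsSubdividedStarShape

lemma neighborSet_center (h : IsSubdividedStarShape Y c B leaf) :
    (subdividedStarOn c B leaf).neighborSet c = B := by
  have := h.center_mem; have := h.notMem_of_mem; have := h.leaf_ne_center
  ext b
  simp only [subdividedStarOn, mem_neighborSet, fromRel_adj]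
  grind

lemma neighborSet_of_mem (h : IsSubdividedStarShape Y c B leaf) {u : V} (hu : u ∈ B) :
    (subdividedStarOn c B leaf).neighborSet u = {c, leaf u} := by
  have := h.center_mem; have := h.notMem_of_mem; have := h.leaf_mem
  ext b
  simp only [subdividedStarOn, mem_neighborSet, fromRel_adj, Set.mem_insert_iff,
    Set.mem_singleton_iff]
  grind

lemma neighborSet_leaf (h : IsSubdividedStarShape Y c B leaf) {u : V} (hu : u ∈ B) :
    (subdividedStarOn c B leaf).neighborSet (leaf u) = {u} := by
  have := h.notMem_of_mem; have := h.leaf_mem; have := h.leaf_ne_center; have := h.injOn_leaf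
  ext b
  simp only [subdividedStarOn, mem_neighborSet, fromRel_adj, Set.mem_singleton_iff]
  grind [Set.InjOn]

lemma isSubdividedStarAt (h : IsSubdividedStarShape Y c B leaf) (hB : 2 ≤ B.ncard) :
    (subdividedStarOn c B leaf).IsSubdividedStarAt c := by
  refine ⟨by rwa [h.neighborSet_center], fun u hu => ?_⟩
  have hu : u ∈ B := hu.mem_of_neighborSet_eq h.neighborSet_center
  exact ⟨leaf u, h.leaf_ne_center u hu, h.neighborSet_of_mem hu, h.neighborSet_leaf hu⟩

lemma isStarAt_of_eq_singleton (h : IsSubdividedStarShape Y c B leaf) {u : V} (hB : B = {u}) :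
    (subdividedStarOn c B leaf).IsStarAt u := by
  have hu : u ∈ B := hB ▸ rfl
  refine ⟨?_, fun v hv => ?_⟩
  · rw [h.neighborSet_of_mem hu, Set.ncard_pair (h.leaf_ne_center u hu).symm]
  · rcases hv.mem_of_neighborSet_eq (h.neighborSet_of_mem hu) with rfl | rfl
    exacts [hB ▸ h.neighborSet_center, h.neighborSet_leaf hu]

lemma adj_center (h : IsSubdividedStarShape Y c B leaf) {u : V} (hu : u ∈ B) :
    (subdividedStarOn c B leaf).Adj c u :=
  (h.neighborSet_center.symm ▸ hu : u ∈ (subdividedStarOn c B leaf).neighborSet c)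

lemma adj_leaf (h : IsSubdividedStarShape Y c B leaf) {u : V} (hu : u ∈ B) :
    (subdividedStarOn c B leaf).Adj u (leaf u) :=
  (h.neighborSet_of_mem hu ▸ Or.inr rfl : leaf u ∈ (subdividedStarOn c B leaf).neighborSet u)

lemma isStarForest (h : IsSubdividedStarShape Y c B leaf) (hBfin : B.Finite) (hB : B.Nonempty) :
    (subdividedStarOn c B leaf).IsStarForest Y := by
  intro v hv
  rcases le_or_gt 2 B.ncard with hB2 | hB2
  · refine Or.inr ⟨c, h.center_mem, h.isSubdividedStarAt hB2, ?_⟩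
    rcases support_subdividedStarOn_subset hv with rfl | hv | ⟨u, hu, rfl⟩
    exacts [Or.inl rfl, Or.inr (Or.inl (h.adj_center hv)),
      Or.inr (Or.inr ⟨u, h.adj_center hu, h.adj_leaf hu⟩)]
  · obtain ⟨u, rfl⟩ : ∃ u, B = {u} :=
      Set.ncard_eq_one.1 (le_antisymm (by omega) ((Set.ncard_pos hBfin).2 hB))
    refine Or.inl ⟨u, h.notMem_of_mem u rfl, h.isStarAt_of_eq_singleton rfl, ?_⟩
    rcases support_subdividedStarOn_subset hv with rfl | hv | ⟨w, hw, rfl⟩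
    · exact Or.inr (h.adj_center rfl).symm
    · exact Or.inl hv
    · rw [Set.mem_singleton_iff.1 hw]
      exact Or.inr (h.adj_leaf rfl)

lemma isStarCover (h : IsSubdividedStarShape Y c B leaf) (hBfin : B.Finite) (hB : B.Nonempty)
    (hadj_c : ∀ u ∈ B, G.Adj c u) (hadj_leaf : ∀ u ∈ B, G.Adj u (leaf u)) :
    G.IsStarCover Y (insert c (B ∪ leaf '' B)) (subdividedStarOn c B leaf) := by
  refine ⟨?_, support_subdividedStarOn_subset, ?_, h.isStarForest hBfin hB⟩
  · intro a b hab
    simp only [subdividedStarOn, fromRel_adj] at hab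
    obtain ⟨-, (⟨rfl, hb⟩ | ⟨ha, rfl⟩) | (⟨rfl, ha⟩ | ⟨hb, rfl⟩)⟩ := hab
    exacts [hadj_c b hb, hadj_leaf a ha, (hadj_c a ha).symm, (hadj_leaf b hb).symm]
  · rintro v ⟨rfl | hv | ⟨u, hu, rfl⟩, -⟩
    · obtain ⟨u, hu⟩ := hB
      exact ⟨u, h.adj_center hu⟩
    · exact ⟨c, (h.adj_center hv).symm⟩
    · exact ⟨u, (h.adj_leaf hu).symm⟩

lemma insert [DecidableEq V] (h : IsSubdividedStarShape Y c B leaf) {x l : V} (hx : x ∉ Y)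
    (hl : l ∈ Y) (hlc : l ≠ c) (hlB : ∀ u ∈ B, leaf u ≠ l) :
    IsSubdividedStarShape Y c (insert x B) (Function.update leaf x l) := by
  have := h.notMem_of_mem; have := h.leaf_mem; have := h.leaf_ne_center; have := h.injOn_leaf
  refine ⟨h.center_mem, ?_, ?_, ?_, ?_⟩ <;>
    simp only [Set.InjOn, Set.mem_insert_iff, Function.update_apply] <;> grind [Set.InjOn]

end IsSubdividedStarShape

end SimpleGraph

structure RootedSpanningTree {V : Type*} (G : SimpleGraph V) (Y : Set V) where
  root : V
  parent : V → V
  depth : V → ℕ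
  root_mem : root ∈ Y
  adj_parent : ∀ v, v ≠ root → G.Adj v (parent v)
  depth_parent : ∀ v, v ≠ root → depth (parent v) + 1 = depth v
  parent_mem_iff : ∀ v, v ≠ root → (parent v ∈ Y ↔ v ∉ Y)

namespace RootedSpanningTree

variable {V : Type*} {G : SimpleGraph V} {Y : Set V} (T : RootedSpanningTree G Y)
  {S R : Set V} {c v w x z : V} {leaf : V → V}

def children (S : Set V) (x : V) : Set V :=
  {w | w ∈ S ∧ w ≠ T.root ∧ T.parent w = x}

def IsSubtree (S : Set V) : Prop :=
  T.root ∈ S ∧ ∀ v ∈ S, v ≠ T.root → T.parent v ∈ S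

def IsDeepest (S : Set V) (x : V) : Prop :=
  x ∈ S ∧ x ∉ Y ∧ ∀ x' ∈ S, x' ∉ Y → T.depth x' ≤ T.depth x

lemma ne_root_of_notMem (hv : v ∉ Y) : v ≠ T.root :=
  fun h => hv (h ▸ T.root_mem)

lemma parent_mem_of_notMem (hv : v ∉ Y) : T.parent v ∈ Y :=
  (T.parent_mem_iff v (T.ne_root_of_notMem hv)).2 hv

lemma adj_of_mem_children (hw : w ∈ T.children S x) : G.Adj x w :=
  hw.2.2 ▸ (T.adj_parent w hw.2.1).symm

lemma depth_of_mem_children (hw : w ∈ T.children S x) : T.depth w = T.depth x + 1 :=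
  hw.2.2 ▸ (T.depth_parent w hw.2.1).symm

lemma mem_iff_of_mem_children (hw : w ∈ T.children S x) : w ∈ Y ↔ x ∉ Y := by
  rw [← hw.2.2, T.parent_mem_iff w hw.2.1]
  tauto

lemma parent_notMem_children (hv : v ≠ T.root) : T.parent v ∉ T.children S v := fun h => by
  have := T.depth_of_mem_children h
  have := T.depth_parent v hv
  omega

lemma isSubdividedStarShape_children (hc : c ∈ Y)
    (hleaf : ∀ u ∈ T.children S c, leaf u ∈ T.children S u) :
    IsSubdividedStarShape Y c (T.children S c) leaf where
  center_mem := hc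
  notMem_of_mem u hu := fun h => (T.mem_iff_of_mem_children hu).1 h hc
  leaf_mem u hu := (T.mem_iff_of_mem_children (hleaf u hu)).2
    fun h => (T.mem_iff_of_mem_children hu).1 h hc
  leaf_ne_center u hu h := by
    have := T.depth_of_mem_children (hleaf u hu)
    have := T.depth_of_mem_children hu
    rw [h] at *
    omega
  injOn_leaf u hu u' hu' h := (hleaf u hu).2.2.symm.trans (h ▸ (hleaf u' hu').2.2)

variable {T}

lemma IsSubtree.diff (hS : T.IsSubtree S) (hR : ∀ v ∈ S, v ≠ T.root → T.parent v ∈ R → v ∈ R)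
    (hroot : T.root ∉ R) : T.IsSubtree (S \ R) :=
  ⟨⟨hS.1, hroot⟩, fun v hv hvr => ⟨hS.2 v hv.1 hvr, fun h => hv.2 (hR v hv.1 hvr h)⟩⟩

lemma IsSubtree.subset_of_root_mem (hS : T.IsSubtree S)
    (hR : ∀ v ∈ S, v ≠ T.root → T.parent v ∈ R → v ∈ R) (hroot : T.root ∈ R) : S ⊆ R := by
  suffices ∀ n, ∀ v ∈ S, T.depth v = n → v ∈ R from fun v hv => this _ v hv rfl
  intro n
  induction n with
  | zero =>
    intro v _ hv
    by_contra hvR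
    have := T.depth_parent v (fun h => hvR (h ▸ hroot))
    omega
  | succ n ih =>
    intro v hvS hv
    by_cases hvr : v = T.root
    · exact hvr ▸ hroot
    · have := T.depth_parent v hvr
      exact hR v hvS hvr (ih _ (hS.2 v hvS hvr) (by omega))

lemma IsDeepest.children_eq_empty (hx : T.IsDeepest S x) (hw : w ∈ T.children S x) :
    T.children S w = ∅ := by
  refine Set.eq_empty_of_forall_notMem fun u hu => ?_
  have hwY : w ∈ Y := (T.mem_iff_of_mem_children hw).2 hx.2.1
  have huY : u ∉ Y := fun h => (T.mem_iff_of_mem_children hu).1 h hwY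
  have := hx.2.2 u hu.1 huY
  have := T.depth_of_mem_children hu
  have := T.depth_of_mem_children hw
  omega

lemma IsSubtree.exists_isDeepest [Finite V] (hS : T.IsSubtree S)
    (hY : ∃ y ∈ S, y ∈ Y ∧ y ≠ T.root) : ∃ x, T.IsDeepest S x := by
  obtain ⟨y, hyS, hyY, hyr⟩ := hY
  have hx : T.parent y ∈ S \ Y := ⟨hS.2 y hyS hyr, fun h => (T.parent_mem_iff y hyr).1 h hyY⟩
  obtain ⟨x, hx, hmax⟩ := Set.exists_max_image (S \ Y) T.depth (Set.toFinite _) ⟨_, hx⟩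
  exact ⟨x, hx.1, hx.2, fun x' hx'S hx'Y => hmax x' ⟨hx'S, hx'Y⟩⟩

lemma exists_isStarCover_of_pendant (hS : T.IsSubtree S)
    (IH : ∀ S' < S, T.IsSubtree S' → (∃ y ∈ S', y ∈ Y ∧ y ≠ T.root) →
      ∃ H, G.IsStarCover Y S' H)
    {K : SimpleGraph V} (hK : G.IsStarCover Y R K) (hRS : R ⊆ S) (hR : R.Nonempty)
    (hclosed : ∀ v ∈ S, v ≠ T.root → T.parent v ∈ R → v ∈ R) (hroot : T.root ∉ R)
    (hlast : (∀ y ∈ S \ R, y ∈ Y → y = T.root) → ∃ H, G.IsStarCover Y S H) :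
    ∃ H, G.IsStarCover Y S H := by
  by_cases hY : ∃ y ∈ S \ R, y ∈ Y ∧ y ≠ T.root
  · obtain ⟨H, hH⟩ := IH _ (hRS.sdiff_ssubset_of_nonempty hR) (hS.diff hclosed hroot) hY
    refine ⟨H ⊔ K, ?_⟩
    simpa only [Set.sdiff_union_of_subset hRS] using hH.sup hK Set.disjoint_sdiff_left
  · push Not at hY
    exact hlast hY

lemma exists_isStarCover_of_two_le_children (hS : T.IsSubtree S)
    (IH : ∀ S' < S, T.IsSubtree S' → (∃ y ∈ S', y ∈ Y ∧ y ≠ T.root) →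
      ∃ H, G.IsStarCover Y S' H)
    (hz : T.IsDeepest S z) (h2 : 2 ≤ (T.children S z).ncard) : ∃ H, G.IsStarCover Y S H := by
  set L := T.children S z
  have hLY : L ⊆ Y := fun w hw => (T.mem_iff_of_mem_children hw).2 hz.2.1
  have hzr := T.ne_root_of_notMem hz.2.1
  refine T.exists_isStarCover_of_pendant hS IH
    (isStarCover_starOn hz.2.1 hLY h2 fun _ => T.adj_of_mem_children)
    (Set.insert_subset hz.1 fun w hw => hw.1) (Set.insert_nonempty _ _) ?_ ?_ ?_
  · rintro v hvS hvr (hv | hv)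
    · exact Or.inr ⟨hvS, hvr, hv⟩
    · have hv' : v ∈ T.children S (T.parent v) := ⟨hvS, hvr, rfl⟩
      rw [hz.children_eq_empty hv] at hv'
      exact hv'.elim
  · rintro (h | h)
    exacts [hzr h.symm, h.2.1 rfl]
  · intro hlast
    have hzp : T.parent z ∈ Y := T.parent_mem_of_notMem hz.2.1
    have hp : T.parent z = T.root := by
      refine hlast _ ⟨hS.2 z hz.1 hzr, ?_⟩ hzp
      rintro (h | h)
      exacts [hz.2.1 (h ▸ hzp), T.parent_notMem_children hzr h]
    refine ⟨_, (isStarCover_starOn hz.2.1 (Set.insert_subset T.root_mem hLY)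
      (h2.trans (Set.ncard_le_ncard (Set.subset_insert _ _)
        ((Set.finite_of_ncard_ne_zero (by omega)).insert _))) ?_).mono ?_ ?_⟩
    · rintro w (rfl | hw)
      exacts [hp ▸ T.adj_parent z hzr, T.adj_of_mem_children hw]
    · rintro w (rfl | rfl | hw)
      exacts [hz.1, hS.1, hw.1]
    · intro y ⟨hyS, hyY⟩
      by_cases hy : y ∈ insert z L
      · rcases hy with rfl | hy
        exacts [Or.inl rfl, Or.inr (Or.inr hy)]
      · exact Or.inr (Or.inl (hlast y ⟨hyS, hy⟩ hyY))

lemma parent_parent_notMem (hcr : c ≠ T.root)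
    (hshape : IsSubdividedStarShape Y c (T.children S c) leaf)
    (hleaf : ∀ u ∈ T.children S c, leaf u ∈ T.children S u) :
    T.parent (T.parent c) ∉ insert c (T.children S c ∪ leaf '' T.children S c) := by
  have hpY : T.parent c ∉ Y := fun h => (T.parent_mem_iff c hcr).1 h hshape.center_mem
  have hdc := T.depth_parent c hcr
  have hdp := T.depth_parent _ (T.ne_root_of_notMem hpY)
  rintro (h | h | ⟨u, hu, h⟩)
  · rw [h] at hdp
    omega
  · exact hshape.notMem_of_mem _ h (T.parent_mem_of_notMem hpY)
  · have hdl := T.depth_of_mem_children (hleaf u hu)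
    have := T.depth_of_mem_children hu
    rw [h] at hdl
    omega

lemma exists_isStarCover_of_subdividedStar_last [Finite V] (hS : T.IsSubtree S) (hcS : c ∈ S)
    (hcr : c ≠ T.root) (hshape : IsSubdividedStarShape Y c (T.children S c) leaf)
    (hleaf : ∀ u ∈ T.children S c, leaf u ∈ T.children S u)
    (hlast : ∀ y ∈ S \ insert c (T.children S c ∪ leaf '' T.children S c), y ∈ Y → y = T.root) :
    ∃ H, G.IsStarCover Y S H := by
  classical
  set B := T.children S c
  set p := T.parent c
  have hpY : p ∉ Y := fun h => (T.parent_mem_iff c hcr).1 h hshape.center_mem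
  have hpr := T.ne_root_of_notMem hpY
  have hpB : p ∉ B := T.parent_notMem_children hcr
  have hpp : T.parent p = T.root :=
    hlast _ ⟨hS.2 p (hS.2 c hcS hcr) hpr, T.parent_parent_notMem hcr hshape hleaf⟩
      (T.parent_mem_of_notMem hpY)
  have hshape' := hshape.insert hpY T.root_mem (fun h => hcr h.symm) fun u hu => (hleaf u hu).2.1
  have hupdate : ∀ u ∈ B, Function.update leaf p T.root u = leaf u := fun u hu =>
    Function.update_of_ne (fun h : u = p => hpB (h ▸ hu)) _ _
  have hadj_c : ∀ u ∈ insert p B, G.Adj c u := by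
    rintro u (rfl | hu)
    exacts [T.adj_parent c hcr, T.adj_of_mem_children hu]
  have hadj_leaf : ∀ u ∈ insert p B, G.Adj u (Function.update leaf p T.root u) := by
    rintro u (rfl | hu)
    · rw [Function.update_self, ← hpp]
      exact T.adj_parent _ hpr
    · rw [hupdate u hu]
      exact T.adj_of_mem_children (hleaf u hu)
  have hK := hshape'.isStarCover (Set.toFinite _) (Set.insert_nonempty _ _) hadj_c hadj_leaf
  rw [Set.image_insert_eq, Function.update_self, Set.EqOn.image_eq hupdate] at hK
  refine ⟨_, hK.mono ?_ ?_⟩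
  · rintro v (rfl | (rfl | hv) | rfl | ⟨u, hu, rfl⟩)
    exacts [hcS, hS.2 c hcS hcr, hv.1, hS.1, (hleaf u hu).1]
  · intro y ⟨hyS, hyY⟩
    by_cases hy : y ∈ insert c (B ∪ leaf '' B)
    · rcases hy with rfl | hy | hy
      exacts [Or.inl rfl, Or.inr (Or.inl (Or.inr hy)), Or.inr (Or.inr (Or.inr hy))]
    · exact Or.inr (Or.inr (Or.inl (hlast y ⟨hyS, hy⟩ hyY)))

lemma exists_isStarCover_of_children_eq_singleton [Finite V] (hS : T.IsSubtree S)
    (IH : ∀ S' < S, T.IsSubtree S' → (∃ y ∈ S', y ∈ Y ∧ y ≠ T.root) →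
      ∃ H, G.IsStarCover Y S' H)
    (hx : T.IsDeepest S x) (hleaf : ∀ x', T.IsDeepest S x' → T.children S x' = {leaf x'}) :
    ∃ H, G.IsStarCover Y S H := by
  have hxr := T.ne_root_of_notMem hx.2.1
  set c := T.parent x
  set B := T.children S c
  have hcY : c ∈ Y := T.parent_mem_of_notMem hx.2.1
  have hcS : c ∈ S := hS.2 x hx.1 hxr
  have hBdeep : ∀ u ∈ B, T.IsDeepest S u := fun u hu => by
    refine ⟨hu.1, fun h => (T.mem_iff_of_mem_children hu).1 h hcY, fun x' hx'S hx'Y => ?_⟩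
    have : T.depth c + 1 = T.depth x := T.depth_parent x hxr
    have := T.depth_of_mem_children hu
    have := hx.2.2 x' hx'S hx'Y
    omega
  have hleaf_mem : ∀ u ∈ B, leaf u ∈ T.children S u := fun u hu =>
    (hleaf u (hBdeep u hu)).symm ▸ rfl
  have hshape := T.isSubdividedStarShape_children hcY hleaf_mem
  have hB : B.Nonempty := ⟨x, hx.1, hxr, rfl⟩
  have hK := hshape.isStarCover (Set.toFinite B) hB (fun _ => T.adj_of_mem_children)
    fun u hu => T.adj_of_mem_children (hleaf_mem u hu)
  have hRS : insert c (B ∪ leaf '' B) ⊆ S := by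
    rintro v (rfl | hv | ⟨u, hu, rfl⟩)
    exacts [hcS, hv.1, (hleaf_mem u hu).1]
  have hclosed : ∀ v ∈ S, v ≠ T.root → T.parent v ∈ insert c (B ∪ leaf '' B) →
      v ∈ insert c (B ∪ leaf '' B) := by
    intro v hvS hvr hv
    have hv' : v ∈ T.children S (T.parent v) := ⟨hvS, hvr, rfl⟩
    rcases hv with hv | hv | ⟨u, hu, hv⟩
    · rw [hv] at hv'
      exact Or.inr (Or.inl hv')
    · rw [hleaf _ (hBdeep _ hv)] at hv'
      exact Or.inr (Or.inr ⟨_, hv, hv'.symm⟩)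
    · rw [← hv, (hBdeep u hu).children_eq_empty (hleaf_mem u hu)] at hv'
      exact hv'.elim
  by_cases hcr : c = T.root
  · exact ⟨_, hK.mono hRS fun v hv => hS.subset_of_root_mem hclosed (hcr ▸ Or.inl rfl) hv.1⟩
  refine T.exists_isStarCover_of_pendant hS IH hK hRS (Set.insert_nonempty _ _) hclosed ?_
    (T.exists_isStarCover_of_subdividedStar_last hS hcS hcr hshape hleaf_mem)
  rintro (h | h | ⟨u, hu, h⟩)
  exacts [hcr h.symm, h.2.1 rfl, (hleaf_mem u hu).2.1 h]

theorem exists_isStarCover [Finite V] (S : Set V) (hS : T.IsSubtree S)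
    (hY : ∃ y ∈ S, y ∈ Y ∧ y ≠ T.root) : ∃ H, G.IsStarCover Y S H := by
  induction S using WellFoundedLT.induction with
  | _ S IH =>
  by_cases hprune : ∃ x ∈ S, x ∉ Y ∧ T.children S x = ∅
  · obtain ⟨x, hxS, hxY, hx⟩ := hprune
    have hsub : T.IsSubtree (S \ {x}) := hS.diff (fun v hvS hvr hv =>
      absurd (hx ▸ ⟨hvS, hvr, hv⟩ : v ∈ (∅ : Set V)) id) fun h => hxY (h ▸ T.root_mem)
    obtain ⟨y, hyS, hyY, hyr⟩ := hY
    obtain ⟨H, hH⟩ := IH _ (Set.sdiff_singleton_ssubset.2 hxS) hsub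
      ⟨y, ⟨hyS, fun h => hxY (h ▸ hyY)⟩, hyY, hyr⟩
    exact ⟨H, hH.mono Set.sdiff_subset fun v hv => ⟨hv.1, fun h => hxY (h ▸ hv.2)⟩⟩
  push Not at hprune
  obtain ⟨x, hx⟩ := hS.exists_isDeepest hY
  by_cases h2 : ∃ z, T.IsDeepest S z ∧ 2 ≤ (T.children S z).ncard
  · obtain ⟨z, hz, h2⟩ := h2
    exact T.exists_isStarCover_of_two_le_children hS IH hz h2
  push Not at h2
  have hone : ∀ x', T.IsDeepest S x' → ∃ w, T.children S x' = {w} := fun x' hx' =>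
    Set.ncard_eq_one.1 (le_antisymm (by have := h2 x' hx'; omega)
      ((Set.ncard_pos (Set.toFinite _)).2 (hprune x' hx'.1 hx'.2.1)))
  choose! leaf hleaf using hone
  exact T.exists_isStarCover_of_children_eq_singleton hS IH hx hleaf

end RootedSpanningTree

namespace SimpleGraph

variable {V : Type*} {G : SimpleGraph V} {Y : Set V}

lemma Connected.finite_of_finite_edgeSet (hG : G.Connected) (hE : G.edgeSet.Finite) :
    Finite V := by
  rcases subsingleton_or_nontrivial V with _ | _
  · exact Finite.of_subsingleton
  rw [← Set.finite_univ_iff, ← hG.preconnected.support_eq_univ]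
  refine (hE.biUnion fun e _ => ?_).subset fun v ⟨w, hvw⟩ =>
    Set.mem_biUnion (G.mem_edgeSet.2 hvw) (Sym2.mem_mk_left v w)
  induction e using Sym2.ind with
  | _ a b => exact (Set.toFinite {a, b}).subset fun v hv => by simpa [Sym2.mem_iff] using hv

lemma Connected.exists_adj_dist_add_one (hG : G.Connected) {r v : V} (hv : v ≠ r) :
    ∃ u, G.Adj v u ∧ G.dist r u + 1 = G.dist r v := by
  obtain ⟨p, hp⟩ := (hG v r).exists_walk_length_eq_dist
  cases p with
  | nil => exact absurd rfl hv
  | @cons _ u _ hvu q =>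
    refine ⟨u, hvu, ?_⟩
    have hq := dist_le q
    have := hvu.diff_dist_adj (u := r)
    rw [Walk.length_cons] at hp
    rw [dist_comm] at hq hp
    omega

lemma Connected.exists_rootedSpanningTree (hG : G.Connected)
    (hbip : ∀ u v, G.Adj u v → (u ∈ Y ↔ v ∉ Y)) {r : V} (hr : r ∈ Y) :
    ∃ T : RootedSpanningTree G Y, T.root = r := by
  choose! parent hparent using fun v (hv : v ≠ r) => hG.exists_adj_dist_add_one hv
  exact ⟨⟨r, parent, G.dist r, hr, fun v hv => (hparent v hv).1, fun v hv => (hparent v hv).2,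
    fun v hv => by have := hbip _ _ (hparent v hv).1; tauto⟩, rfl⟩

lemma exists_two_mem_of_not_star (hbip : ∀ u v, G.Adj u v → (u ∈ Y ↔ v ∉ Y))
    (hE : G.edgeSet.Nonempty) (hnostar : ¬ ∃ y ∈ Y, ∀ e ∈ G.edgeSet, y ∈ e) :
    ∃ r ∈ Y, ∃ y ∈ Y, y ≠ r := by
  have hY : ∀ e ∈ G.edgeSet, ∃ y ∈ Y, y ∈ e := by
    intro e he
    induction e using Sym2.ind with
    | _ a b =>
      by_cases ha : a ∈ Y
      · exact ⟨a, ha, Sym2.mem_mk_left a b⟩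
      · exact ⟨b, not_not.1 fun hb => ha ((hbip a b he).2 hb), Sym2.mem_mk_right a b⟩
  obtain ⟨e, he⟩ := hE
  obtain ⟨r, hr, -⟩ := hY e he
  push Not at hnostar
  obtain ⟨e', he', hre'⟩ := hnostar r hr
  obtain ⟨y, hy, hye'⟩ := hY e' he'
  exact ⟨r, hr, y, hy, fun h => hre' (h ▸ hye')⟩

end SimpleGraph

theorem stmt2 {V : Type*} (G : SimpleGraph V) (X Y : Set V)
    (hpart : ∀ v, (v ∈ X ∧ v ∉ Y) ∨ (v ∈ Y ∧ v ∉ X))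
    (hbip : ∀ u v, G.Adj u v → (u ∈ X ∧ v ∈ Y) ∨ (u ∈ Y ∧ v ∈ X))
    (hconn : G.Connected) (h2 : 2 ≤ G.edgeSet.ncard)
    (hnostar : ¬ ∃ y ∈ Y, ∀ e ∈ G.edgeSet, y ∈ e) :
    ∃ H : SimpleGraph V, H ≤ G ∧ (∀ y ∈ Y, (H.neighborSet y).Nonempty) ∧
      ∀ C : H.ConnectedComponent, (∃ v ∈ C.supp, (H.neighborSet v).Nonempty) →
        (∃ x ∈ X, IsNontrivialStarComp H C.supp x) ∨
        (∃ y ∈ Y, IsNontrivialSubdividedStarComp H C.supp y) := by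
  obtain rfl : X = Yᶜ := Set.ext fun v => by have := hpart v; rw [Set.mem_compl_iff]; tauto
  have hbip' : ∀ u v, G.Adj u v → (u ∈ Y ↔ v ∉ Y) := fun u v huv => by
    have := hbip u v huv; rw [Set.mem_compl_iff, Set.mem_compl_iff] at this; tauto
  have : Finite V := hconn.finite_of_finite_edgeSet (Set.finite_of_ncard_ne_zero (by omega))
  obtain ⟨r, hr, y, hy, hyr⟩ := exists_two_mem_of_not_star hbip'
    (Set.nonempty_of_ncard_ne_zero (by omega)) hnostar
  obtain ⟨T, rfl⟩ := hconn.exists_rootedSpanningTree hbip' hr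
  obtain ⟨H, hH⟩ := T.exists_isStarCover Set.univ ⟨trivial, fun _ _ _ => trivial⟩
    ⟨y, trivial, hy, hyr⟩
  exact ⟨H, hH.le, fun y hy => hH.subset_support ⟨trivial, hy⟩,
    hH.isStarForest.connectedComponent⟩
end

section
/- Every graph G=(V,E) that can be edge-decomposed into a spanning bipartite subgraph H' without trivial connected components and a subgraph whose edge set M' is a matching admits a partial edge colouring with 16 colours satisfying all edges of G. -/
open SimpleGraph

theorem stmt6 {V : Type*} (G H' : SimpleGraph V) (M' : Set (Sym2 V))
    (hdecomp : H'.edgeSet ∪ M' = G.edgeSet)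
    (hdisj : Disjoint H'.edgeSet M')
    (hM'sub : M' ⊆ G.edgeSet)
    (hmatch : ∀ e ∈ M', ∀ f ∈ M', e ≠ f → ∀ v : V, ¬(v ∈ e ∧ v ∈ f))
    (hbip : H'.Colorable 2)
    (hnoisovertex : ∀ v, (H'.neighborSet v).Nonempty)
    (hnoisoedge : ∀ e ∈ H'.edgeSet, (EON H' e).Nonempty) :
    ∃ c : Sym2 V → Option ℕ, PartialColouring G c 16 ∧
      ∀ e ∈ G.edgeSet, SatisfiedP G c e := by
  classical
  obtain ⟨σ⟩ := hbip
  have hHsub : H'.edgeSet ⊆ G.edgeSet := by rw [← hdecomp]; exact Set.subset_union_left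
  -- matching bit
  set ι : V ↪ Cardinal := embeddingToCardinal with hιdef
  set μ : V → ℕ := fun v => if ∃ w, s(v, w) ∈ M' ∧ ι v < ι w then 1 else 0 with hμdef
  have hμle : ∀ v, μ v ≤ 1 := by
    intro v; simp only [hμdef]; split <;> omega
  have hpartner : ∀ x y z : V, s(x, y) ∈ M' → s(x, z) ∈ M' → y = z := by
    intro x y z h1 h2
    by_contra hne
    have hed : s(x, y) ≠ s(x, z) := by
      intro h
      rcases Sym2.eq_iff.mp h with ⟨-, h2'⟩ | ⟨h1', h2'⟩
      · exact hne h2'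
      · exact hne (h2'.trans h1')
    exact hmatch _ h1 _ h2 hed x ⟨Sym2.mem_iff.mpr (Or.inl rfl), Sym2.mem_iff.mpr (Or.inl rfl)⟩
  have hμne : ∀ u v, s(u, v) ∈ M' → μ u ≠ μ v := by
    intro u v hM
    have huv : u ≠ v := by
      intro h; subst h; exact ((SimpleGraph.mem_edgeSet _).mp (hM'sub hM)).ne rfl
    have hMswap : s(v, u) ∈ M' := by rw [Sym2.eq_swap]; exact hM
    rcases lt_trichotomy (ι u) (ι v) with hlt | heq | hgt
    · have h1 : μ u = 1 := by
        simp only [hμdef]; rw [if_pos ⟨v, hM, hlt⟩]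
      have h2 : μ v = 0 := by
        simp only [hμdef]; rw [if_neg]
        rintro ⟨w, hw, hlt'⟩
        rw [hpartner v w u hw hMswap] at hlt'
        exact absurd (hlt.trans hlt') (lt_irrefl _)
      omega
    · exact absurd (ι.injective heq) huv
    · have h1 : μ u = 0 := by
        simp only [hμdef]; rw [if_neg]
        rintro ⟨w, hw, hlt'⟩
        rw [hpartner u w v hw hM] at hlt'
        exact absurd (hgt.trans hlt') (lt_irrefl _)
      have h2 : μ v = 1 := by
        simp only [hμdef]; rw [if_pos ⟨u, hMswap, hgt⟩]
      omega
  -- every vertex can reach a vertex with two distinct neighbours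
  have hgood : ∀ v : V, ∃ x, H'.Reachable v x ∧ ∃ a b, a ≠ b ∧ H'.Adj x a ∧ H'.Adj x b := by
    intro v
    obtain ⟨w, hw⟩ := hnoisovertex v
    rw [SimpleGraph.mem_neighborSet] at hw
    have he : s(v, w) ∈ H'.edgeSet := (SimpleGraph.mem_edgeSet _).mpr hw
    obtain ⟨f, hf⟩ := hnoisoedge _ he
    revert hf
    induction f using Sym2.ind with
    | _ a b =>
      intro hf
      simp only [EON, ECN, Set.mem_diff, Set.mem_setOf_eq, Set.mem_singleton_iff] at hf
      obtain ⟨⟨hfE, x, hxf, hxe⟩, hfne⟩ := hf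
      have hab : H'.Adj a b := (SimpleGraph.mem_edgeSet _).mp hfE
      rcases Sym2.mem_iff.mp hxf with rfl | rfl
      · -- x = a
        rcases Sym2.mem_iff.mp hxe with rfl | rfl
        · -- a = v
          refine ⟨x, SimpleGraph.Reachable.refl x, b, w, ?_, hab, hw⟩
          intro h; subst h; exact hfne rfl
        · -- a = w
          refine ⟨x, hw.reachable, b, v, ?_, hab, hw.symm⟩
          intro h; subst h; exact hfne (Sym2.eq_swap)
      · -- x = b
        rcases Sym2.mem_iff.mp hxe with rfl | rfl
        · refine ⟨x, SimpleGraph.Reachable.refl x, a, w, ?_, hab.symm, hw⟩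
          intro h; subst h; exact hfne (Sym2.eq_swap)
        · refine ⟨x, hw.reachable, a, v, ?_, hab.symm, hw.symm⟩
          intro h; subst h; exact hfne rfl
  -- canonical root per component
  have hex : ∀ cc : H'.ConnectedComponent,
      ∃ x, H'.connectedComponentMk x = cc ∧ ∃ a b, a ≠ b ∧ H'.Adj x a ∧ H'.Adj x b := by
    intro cc
    induction cc using SimpleGraph.ConnectedComponent.ind with
    | _ v =>
      obtain ⟨x, hre, hx⟩ := hgood v
      exact ⟨x, SimpleGraph.ConnectedComponent.sound hre.symm, hx⟩
  set ρ : V → V := fun v => (hex (H'.connectedComponentMk v)).choose with hρdef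
  have hρreach : ∀ v, H'.Reachable v (ρ v) := by
    intro v
    have h := (hex (H'.connectedComponentMk v)).choose_spec.1
    exact (SimpleGraph.ConnectedComponent.exact h).symm
  have hρgood : ∀ v, ∃ a b, a ≠ b ∧ H'.Adj (ρ v) a ∧ H'.Adj (ρ v) b := by
    intro v; exact (hex _).choose_spec.2
  have hρeq : ∀ u v, H'.Reachable u v → ρ u = ρ v := by
    intro u v h; simp only [hρdef]; rw [SimpleGraph.ConnectedComponent.sound h]
  set dep : V → ℕ := fun v => H'.dist v (ρ v) with hdepdef
  have hdeproot : ∀ v, v = ρ v → dep v = 0 := by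
    intro v h; simp only [hdepdef]; rw [← h]; exact SimpleGraph.dist_self
  have hdep0 : ∀ v, dep v = 0 → v = ρ v := by
    intro v h; exact (hρreach v).dist_eq_zero_iff.mp h
  -- parent
  have hstep : ∀ a b : V, H'.Reachable a b → a ≠ b →
      ∃ w, H'.Adj a w ∧ H'.dist w b + 1 = H'.dist a b := by
    intro a b hr hne
    obtain ⟨p, hp⟩ := hr.exists_walk_length_eq_dist
    have hd0 : H'.dist a b ≠ 0 := fun h0 => hne (hr.dist_eq_zero_iff.mp h0)
    cases p with
    | nil => rw [SimpleGraph.Walk.length_nil] at hp; exact absurd hp.symm hd0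
    | cons hadj q =>
      rename_i w
      refine ⟨w, hadj, ?_⟩
      rw [SimpleGraph.Walk.length_cons] at hp
      have h1 : H'.dist w b ≤ q.length := SimpleGraph.dist_le q
      obtain ⟨q', hq'⟩ := q.reachable.exists_walk_length_eq_dist
      have h2 := SimpleGraph.dist_le (SimpleGraph.Walk.cons hadj q')
      rw [SimpleGraph.Walk.length_cons, hq'] at h2
      omega
  have hparent0 : ∀ v, ∃ w, v ≠ ρ v → H'.Adj v w ∧ dep w + 1 = dep v ∧ ρ w = ρ v := by
    intro v
    by_cases hv : v = ρ v
    · exact ⟨v, fun h => absurd hv h⟩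
    obtain ⟨w, hadj, hd⟩ := hstep v (ρ v) (hρreach v) hv
    refine ⟨w, fun _ => ⟨hadj, ?_, hρeq w v hadj.symm.reachable⟩⟩
    have hρw : ρ w = ρ v := hρeq w v hadj.symm.reachable
    simp only [hdepdef]
    rw [hρw]
    exact hd
  choose par hpar using hparent0
  -- designated children of roots
  have hdes0 : ∀ x, ∃ ab : V × V, x = ρ x → ab.1 ≠ ab.2 ∧ H'.Adj x ab.1 ∧ H'.Adj x ab.2 := by
    intro x
    by_cases hx : x = ρ x
    · obtain ⟨a, b, hab, ha, hb⟩ := hρgood x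
      rw [← hx] at ha hb
      exact ⟨(a, b), fun _ => ⟨hab, ha, hb⟩⟩
    · exact ⟨(x, x), fun h => absurd h hx⟩
  choose des hdes using hdes0
  -- child of root facts
  have hchildroot : ∀ x w, x = ρ x → H'.Adj x w → w ≠ ρ w ∧ par w = x ∧ dep w = 1 := by
    intro x w hx hadj
    have hxw : x ≠ w := hadj.ne
    have hρw : ρ w = x := by rw [← hρeq x w hadj.reachable, ← hx]
    have hw : w ≠ ρ w := by rw [hρw]; exact fun h => hxw h.symm
    have hle : dep w ≤ 1 := by
      have h2 := SimpleGraph.dist_le (SimpleGraph.Walk.cons hadj.symm SimpleGraph.Walk.nil)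
      simp only [SimpleGraph.Walk.length_cons, SimpleGraph.Walk.length_nil] at h2
      simp only [hdepdef]; rw [hρw]; exact h2
    have hne0 : dep w ≠ 0 := fun h => hw (hdep0 w h)
    have hdw : dep w = 1 := by omega
    refine ⟨hw, ?_, hdw⟩
    have h1 := (hpar w hw).2.1
    have h2 : par w = ρ (par w) := hdep0 _ (by omega)
    have h3 := (hpar w hw).2.2
    rw [h2, h3, hρw]
  -- parity via the 2-colouring
  have hfin2 : ∀ i j k : Fin 2, i ≠ j → j ≠ k → i = k := by decide
  have hfin2' : ∀ i j k : Fin 2, ((i = k) ↔ (j = k)) → i = j := by decide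
  have hwalkpar : ∀ (a b : V) (p : H'.Walk a b), σ a = σ b ↔ Even p.length := by
    intro a b p
    induction p with
    | nil => simp
    | cons h q ih =>
      rename_i x y z
      have hne := σ.valid h
      rw [SimpleGraph.Walk.length_cons, Nat.even_add_one, ← ih]
      constructor
      · intro hh hvw; exact hne (hh.trans hvw.symm)
      · intro hh; exact hfin2 _ _ _ hne (fun hc => hh hc)
  have hdepadj : ∀ x y, H'.Adj x y → dep y = dep x + 1 ∨ dep x = dep y + 1 := by
    intro x y hadj
    have hρxy : ρ x = ρ y := hρeq x y hadj.reachable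
    obtain ⟨p, hp⟩ := (hρreach x).exists_walk_length_eq_dist
    obtain ⟨q, hq⟩ := (hρreach y).exists_walk_length_eq_dist
    have h1 : dep x ≤ dep y + 1 := by
      have h2 := SimpleGraph.dist_le (SimpleGraph.Walk.cons hadj (q.copy rfl hρxy.symm))
      rw [SimpleGraph.Walk.length_cons, SimpleGraph.Walk.length_copy, hq] at h2
      exact h2
    have h2 : dep y ≤ dep x + 1 := by
      have h3 := SimpleGraph.dist_le (SimpleGraph.Walk.cons hadj.symm (p.copy rfl hρxy))
      rw [SimpleGraph.Walk.length_cons, SimpleGraph.Walk.length_copy, hp] at h3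
      exact h3
    have h3 : σ x ≠ σ y := σ.valid hadj
    have h4 : σ x = σ (ρ x) ↔ Even (dep x) := by
      have hh := hwalkpar _ _ p; rw [hp] at hh; exact hh
    have h5 : σ y = σ (ρ x) ↔ Even (dep y) := by
      have hh := hwalkpar _ _ q; rw [hq] at hh; rw [hρxy]; exact hh
    have h6 : dep x ≠ dep y := by
      intro hxy
      apply h3
      apply hfin2' _ _ (σ (ρ x))
      rw [h4, h5, hxy]
    omega
  -- the colouring
  set cv : V → ℕ := fun y =>
    if par y = ρ (par y) ∧ y = (des (par y)).1 then 8 + 2 * μ (par y) + μ y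
    else if par y = ρ (par y) ∧ y = (des (par y)).2 then 12 + 2 * μ (par y) + μ y
    else dep y % 4 + 4 * μ y with hcvdef
  set c : Sym2 V → Option ℕ :=
    fun f => if h : ∃ z, z ≠ ρ z ∧ f = s(z, par z) then some (cv h.choose) else none with hcdef
  -- well-definedness
  have hchild : ∀ y z, y ≠ ρ y → z ≠ ρ z → s(y, par y) = s(z, par z) → y = z := by
    intro y z hy hz h
    rcases Sym2.eq_iff.mp h with ⟨h1, -⟩ | ⟨h1, h2⟩
    · exact h1
    · have e1 := (hpar y hy).2.1
      have e2 := (hpar z hz).2.1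
      rw [h2] at e1
      rw [← h1] at e2
      omega
  have hcF : ∀ y, y ≠ ρ y → c (s(y, par y)) = some (cv y) := by
    intro y hy
    have hexy : ∃ z, z ≠ ρ z ∧ s(y, par y) = s(z, par z) := ⟨y, hy, rfl⟩
    simp only [hcdef]
    rw [dif_pos hexy]
    have hspec := hexy.choose_spec
    rw [hchild _ _ hspec.1 hy hspec.2.symm]
  have hcSome : ∀ f α, c f = some α → ∃ z, z ≠ ρ z ∧ f = s(z, par z) ∧ cv z = α := by
    intro f α h
    simp only [hcdef] at h
    by_cases hexf : ∃ z, z ≠ ρ z ∧ f = s(z, par z)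
    · rw [dif_pos hexf] at h
      exact ⟨hexf.choose, hexf.choose_spec.1, hexf.choose_spec.2, Option.some.inj h⟩
    · rw [dif_neg hexf] at h; cases h
  -- shape of colours
  have hshape : ∀ y, y ≠ ρ y →
      (par y = ρ (par y) ∧ dep y = 1 ∧
        ((y = (des (par y)).1 ∧ cv y = 8 + 2 * μ (par y) + μ y) ∨
         (y ≠ (des (par y)).1 ∧ y = (des (par y)).2 ∧ cv y = 12 + 2 * μ (par y) + μ y))) ∨
      cv y = dep y % 4 + 4 * μ y := by
    intro y hy
    have hdepy : par y = ρ (par y) → dep y = 1 := by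
      intro h
      have h1 := (hpar y hy).2.1
      have h2 : dep (par y) = 0 := hdeproot (par y) h
      omega
    simp only [hcvdef]
    split_ifs with h1 h2
    · exact Or.inl ⟨h1.1, hdepy h1.1, Or.inl ⟨h1.2, rfl⟩⟩
    · exact Or.inl ⟨h2.1, hdepy h2.1, Or.inr ⟨fun hh => h1 ⟨h2.1, hh⟩, h2.2, rfl⟩⟩
    · exact Or.inr rfl
  have hspec1 : ∀ z, z ≠ ρ z → 8 ≤ cv z → cv z < 12 →
      par z = ρ (par z) ∧ z = (des (par z)).1 ∧ cv z = 8 + 2 * μ (par z) + μ z := by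
    intro z hz h8 h12
    have hm1 := hμle z; have hm2 := hμle (par z)
    rcases hshape z hz with ⟨hr, hd, ⟨ha, hb⟩ | ⟨-, ha, hb⟩⟩ | h
    · exact ⟨hr, ha, hb⟩
    · omega
    · omega
  have hspec2 : ∀ z, z ≠ ρ z → 12 ≤ cv z →
      par z = ρ (par z) ∧ z = (des (par z)).2 ∧ cv z = 12 + 2 * μ (par z) + μ z := by
    intro z hz h12
    have hm1 := hμle z; have hm2 := hμle (par z)
    rcases hshape z hz with ⟨hr, hd, ⟨ha, hb⟩ | ⟨-, ha, hb⟩⟩ | h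
    · omega
    · exact ⟨hr, ha, hb⟩
    · omega
  have hlt16 : ∀ z, z ≠ ρ z → cv z < 16 := by
    intro z hz
    have hm1 := hμle z; have hm2 := hμle (par z)
    rcases hshape z hz with ⟨-, -, ⟨-, h⟩ | ⟨-, -, h⟩⟩ | h <;> omega
  -- designated children colours
  have hS1 : ∀ x, x = ρ x → cv ((des x).1) = 8 + 2 * μ x + μ ((des x).1) := by
    intro x hx
    obtain ⟨hne, h1, h2⟩ := hdes x hx
    obtain ⟨hd1r, hd1p, -⟩ := hchildroot x _ hx h1
    simp only [hcvdef]
    rw [hd1p]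
    rw [if_pos ⟨hx, rfl⟩]
  have hS2 : ∀ x, x = ρ x → cv ((des x).2) = 12 + 2 * μ x + μ ((des x).2) := by
    intro x hx
    obtain ⟨hne, h1, h2⟩ := hdes x hx
    obtain ⟨hd2r, hd2p, -⟩ := hchildroot x _ hx h2
    simp only [hcvdef]
    rw [hd2p]
    rw [if_neg, if_pos ⟨hx, rfl⟩]
    rintro ⟨-, hh⟩
    exact hne hh.symm
  -- generic witness lemma
  have hwit : ∀ u v y : V, s(u, v) ∈ G.edgeSet → y ≠ ρ y →
      (y = u ∨ y = v ∨ par y = u ∨ par y = v) → s(y, par y) ≠ s(u, v) →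
      (∀ z, z ≠ ρ z → (z = u ∨ z = v ∨ par z = u ∨ par z = v) → cv z = cv y → z = y) →
      SatisfiedP G c (s(u, v)) := by
    intro u v y he hy hshare hne huniq
    have hyG : s(y, par y) ∈ G.edgeSet := hHsub ((SimpleGraph.mem_edgeSet _).mpr (hpar y hy).1)
    refine ⟨s(y, par y), ?_, cv y, hcF y hy, ?_⟩
    · simp only [EON, ECN, Set.mem_diff, Set.mem_setOf_eq, Set.mem_singleton_iff]
      refine ⟨⟨hyG, ?_⟩, hne⟩
      rcases hshare with h | h | h | h
      · exact ⟨y, Sym2.mem_iff.mpr (Or.inl rfl), Sym2.mem_iff.mpr (Or.inl h)⟩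
      · exact ⟨y, Sym2.mem_iff.mpr (Or.inl rfl), Sym2.mem_iff.mpr (Or.inr h)⟩
      · exact ⟨par y, Sym2.mem_iff.mpr (Or.inr rfl), Sym2.mem_iff.mpr (Or.inl h)⟩
      · exact ⟨par y, Sym2.mem_iff.mpr (Or.inr rfl), Sym2.mem_iff.mpr (Or.inr h)⟩
    · intro f hf hcf
      obtain ⟨z, hz, hfz, hval⟩ := hcSome f _ hcf
      simp only [ECN, Set.mem_setOf_eq] at hf
      obtain ⟨-, w, hw1, hw2⟩ := hf
      rw [hfz] at hw1
      have hsz : z = u ∨ z = v ∨ par z = u ∨ par z = v := by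
        rcases Sym2.mem_iff.mp hw1 with rfl | rfl <;>
          rcases Sym2.mem_iff.mp hw2 with h2 | h2 <;> tauto
      rw [hfz, huniq z hz hsz hval]
  -- the two colours at nonroot endpoints differ
  have hab : ∀ u v, s(u, v) ∈ G.edgeSet → u ≠ ρ u → v ≠ ρ v → cv u ≠ cv v := by
    intro u v he hu hv heq
    have hMH : s(u, v) ∈ H'.edgeSet ∨ s(u, v) ∈ M' := by
      rw [← hdecomp] at he; exact he
    have hm1 := hμle u; have hm2 := hμle v
    have hm3 := hμle (par u); have hm4 := hμle (par v)
    rcases hshape u hu with ⟨hru, hdu, hsu⟩ | hnu <;>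
      rcases hshape v hv with ⟨hrv, hdv, hsv⟩ | hnv
    · rcases hMH with hH | hM
      · rcases hdepadj u v ((SimpleGraph.mem_edgeSet _).mp hH) with h | h <;> omega
      · have := hμne u v hM
        rcases hsu with ⟨-, e1⟩ | ⟨-, -, e1⟩ <;> rcases hsv with ⟨-, e2⟩ | ⟨-, -, e2⟩ <;> omega
    · rcases hsu with ⟨-, e1⟩ | ⟨-, -, e1⟩ <;> omega
    · rcases hsv with ⟨-, e2⟩ | ⟨-, -, e2⟩ <;> omega
    · rcases hMH with hH | hM
      · rcases hdepadj u v ((SimpleGraph.mem_edgeSet _).mp hH) with h | h <;> omega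
      · have := hμne u v hM; omega
  -- main case: both endpoints nonroot
  have keyNR : ∀ u v, s(u, v) ∈ G.edgeSet → u ≠ ρ u → v ≠ ρ v → SatisfiedP G c (s(u, v)) := by
    intro u v he hu hv
    have huv : u ≠ v := ((SimpleGraph.mem_edgeSet _).mp he).ne
    have habuv := hab u v he hu hv
    by_cases h8u : 8 ≤ cv u
    · -- witness: parent edge of u (a special edge)
      have hspecu : par u = ρ (par u) := by
        rcases hshape u hu with ⟨h, -, -⟩ | hn
        · exact h
        · have := hμle u; omega
      refine hwit u v u he hu (Or.inl rfl) ?_ ?_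
      · intro h
        rcases Sym2.eq_iff.mp h with ⟨-, h2⟩ | ⟨h1, -⟩
        · exact hv (by rw [← h2]; exact hspecu)
        · exact huv h1
      · intro z hz hsz hcol
        have h8z : 8 ≤ cv z := by rw [hcol]; exact h8u
        have hspecz : par z = ρ (par z) := by
          rcases hshape z hz with ⟨h, -, -⟩ | hn
          · exact h
          · have := hμle z; omega
        rcases hsz with h | h | h | h
        · exact h
        · subst h; exact absurd hcol.symm habuv
        · exact absurd (by rw [← h]; exact hspecz) hu
        · exact absurd (by rw [← h]; exact hspecz) hv
    · by_cases h8v : 8 ≤ cv v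
      · have hspecv : par v = ρ (par v) := by
          rcases hshape v hv with ⟨h, -, -⟩ | hn
          · exact h
          · have := hμle v; omega
        refine hwit u v v he hv (Or.inr (Or.inl rfl)) ?_ ?_
        · intro h
          rcases Sym2.eq_iff.mp h with ⟨h1, -⟩ | ⟨-, h2⟩
          · exact huv h1.symm
          · exact hu (by rw [← h2]; exact hspecv)
        · intro z hz hsz hcol
          have h8z : 8 ≤ cv z := by rw [hcol]; exact h8v
          have hspecz : par z = ρ (par z) := by
            rcases hshape z hz with ⟨h, -, -⟩ | hn
            · exact h
            · have := hμle z; omega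
          rcases hsz with h | h | h | h
          · subst h; exact absurd hcol habuv
          · exact h
          · exact absurd (by rw [← h]; exact hspecz) hu
          · exact absurd (by rw [← h]; exact hspecz) hv
      · -- both normal
        have hnu : cv u = dep u % 4 + 4 * μ u := by
          rcases hshape u hu with ⟨-, -, ⟨-, h⟩ | ⟨-, -, h⟩⟩ | h
          · have := hμle (par u); omega
          · have := hμle (par u); omega
          · exact h
        have hnv : cv v = dep v % 4 + 4 * μ v := by
          rcases hshape v hv with ⟨-, -, ⟨-, h⟩ | ⟨-, -, h⟩⟩ | h
          · have := hμle (par v); omega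
          · have := hμle (par v); omega
          · exact h
        have hnormz : ∀ z, z ≠ ρ z → (par z = u ∨ par z = v) → cv z = dep z % 4 + 4 * μ z := by
          intro z hz h
          rcases hshape z hz with ⟨hr, -, -⟩ | hn
          · rcases h with h | h
            · exact absurd (by rw [← h]; exact hr) hu
            · exact absurd (by rw [← h]; exact hr) hv
          · exact hn
        by_cases hc4 : (dep v + 1) % 4 = dep u % 4
        · -- witness: parent edge of v
          have hpvu : par v ≠ u := by
            intro h
            have hh := (hpar v hv).2.1
            rw [h] at hh
            omega
          refine hwit u v v he hv (Or.inr (Or.inl rfl)) ?_ ?_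
          · intro h
            rcases Sym2.eq_iff.mp h with ⟨h1, -⟩ | ⟨-, h2⟩
            · exact huv h1.symm
            · exact hpvu h2
          · intro z hz hsz hcol
            have hmz := hμle z; have hmu := hμle u; have hmv := hμle v
            rcases hsz with h | h | h | h
            · subst h; exact absurd hcol habuv
            · exact h
            · have hnz := hnormz z hz (Or.inl h)
              have hdz : dep u + 1 = dep z := by
                have hh := (hpar z hz).2.1; rw [h] at hh; omega
              rw [hnz, hnv] at hcol; omega
            · have hnz := hnormz z hz (Or.inr h)
              have hdz : dep v + 1 = dep z := by
                have hh := (hpar z hz).2.1; rw [h] at hh; omega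
              rw [hnz, hnv] at hcol; omega
        · -- witness: parent edge of u
          have hpuv : par u ≠ v := by
            intro h
            have hh := (hpar u hu).2.1
            rw [h] at hh
            exact hc4 (by omega)
          refine hwit u v u he hu (Or.inl rfl) ?_ ?_
          · intro h
            rcases Sym2.eq_iff.mp h with ⟨-, h2⟩ | ⟨h1, -⟩
            · exact hpuv h2
            · exact huv h1
          · intro z hz hsz hcol
            have hmz := hμle z; have hmu := hμle u; have hmv := hμle v
            rcases hsz with h | h | h | h
            · exact h
            · subst h; exact absurd hcol.symm habuv
            · have hnz := hnormz z hz (Or.inl h)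
              have hdz : dep u + 1 = dep z := by
                have hh := (hpar z hz).2.1; rw [h] at hh; omega
              rw [hnz, hnu] at hcol; omega
            · have hnz := hnormz z hz (Or.inr h)
              have hdz : dep v + 1 = dep z := by
                have hh := (hpar z hz).2.1; rw [h] at hh; omega
              rw [hnz, hnu] at hcol; omega
  have hMnotH : ∀ e', e' ∈ M' → e' ∉ H'.edgeSet := fun e' hM hH =>
    Set.disjoint_left.mp hdisj hH hM
  -- root case
  have keyR : ∀ u v, s(u, v) ∈ G.edgeSet → u = ρ u → SatisfiedP G c (s(u, v)) := by
    intro u v he hu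
    have huv : u ≠ v := ((SimpleGraph.mem_edgeSet _).mp he).ne
    obtain ⟨hdne, had1, had2⟩ := hdes u hu
    obtain ⟨h1r, h1p, h1d⟩ := hchildroot u _ hu had1
    obtain ⟨h2r, h2p, h2d⟩ := hchildroot u _ hu had2
    have hc1 := hS1 u hu
    have hc2 := hS2 u hu
    have hMH : s(u, v) ∈ H'.edgeSet ∨ s(u, v) ∈ M' := by
      rw [← hdecomp] at he; exact he
    rcases hMH with hH | hM
    · have hadj : H'.Adj u v := (SimpleGraph.mem_edgeSet _).mp hH
      obtain ⟨hvr, hvp, hvd⟩ := hchildroot u v hu hadj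
      by_cases hvd1 : v = (des u).1
      · -- witness: second designated child edge
        refine hwit u v ((des u).2) he h2r (Or.inr (Or.inr (Or.inl h2p))) ?_ ?_
        · rw [h2p]
          intro h
          rcases Sym2.eq_iff.mp h with ⟨-, hb⟩ | ⟨ha, -⟩
          · exact huv hb
          · exact hdne ((hvd1 ▸ ha : (des u).2 = (des u).1)).symm
        · intro z hz hsz hcol
          rw [hc2] at hcol
          have h12 : 12 ≤ cv z := by
            have := hμle u; have := hμle ((des u).2); omega
          obtain ⟨hrz, hz2, -⟩ := hspec2 z hz h12
          rcases hsz with h | h | h | h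
          · subst h; exact absurd hu hz
          · subst h
            rw [hvp] at hz2
            exact absurd (hvd1.symm.trans hz2) hdne
          · rw [h] at hz2; exact hz2
          · rw [h] at hrz; exact absurd hrz hvr
      · -- witness: first designated child edge
        refine hwit u v ((des u).1) he h1r (Or.inr (Or.inr (Or.inl h1p))) ?_ ?_
        · rw [h1p]
          intro h
          rcases Sym2.eq_iff.mp h with ⟨-, hb⟩ | ⟨ha, -⟩
          · exact huv hb
          · exact hvd1 ha.symm
        · intro z hz hsz hcol
          rw [hc1] at hcol
          have h8 : 8 ≤ cv z := by
            have := hμle u; have := hμle ((des u).1); omega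
          have h12 : cv z < 12 := by
            have := hμle u; have := hμle ((des u).1); omega
          obtain ⟨hrz, hz1, -⟩ := hspec1 z hz h8 h12
          rcases hsz with h | h | h | h
          · subst h; exact absurd hu hz
          · subst h; rw [hvp] at hz1; exact absurd hz1 hvd1
          · rw [h] at hz1; exact hz1
          · rw [h] at hrz; exact absurd hrz hvr
    · -- e ∈ M'
      have hnH := hMnotH _ hM
      have hμuv := hμne u v hM
      have hned1 : s((des u).1, par ((des u).1)) ≠ s(u, v) := by
        intro h
        apply hnH
        rw [← h]
        exact (SimpleGraph.mem_edgeSet _).mpr (hpar _ h1r).1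
      have hned2 : s((des u).2, par ((des u).2)) ≠ s(u, v) := by
        intro h
        apply hnH
        rw [← h]
        exact (SimpleGraph.mem_edgeSet _).mpr (hpar _ h2r).1
      by_cases hvroot : v = ρ v
      · refine hwit u v ((des u).1) he h1r (Or.inr (Or.inr (Or.inl h1p))) hned1 ?_
        intro z hz hsz hcol
        rw [hc1] at hcol
        have h8 : 8 ≤ cv z := by
          have := hμle u; have := hμle ((des u).1); omega
        have h12 : cv z < 12 := by
          have := hμle u; have := hμle ((des u).1); omega
        obtain ⟨hrz, hz1, hcz⟩ := hspec1 z hz h8 h12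
        rcases hsz with h | h | h | h
        · subst h; exact absurd hu hz
        · subst h; exact absurd hvroot hz
        · rw [h] at hz1; exact hz1
        · rw [h] at hcz
          rw [hcz] at hcol
          have := hμle u; have := hμle v; have := hμle z; have := hμle ((des u).1)
          omega
      · by_cases hcv : cv v = 8 + 2 * μ u + μ ((des u).1)
        · refine hwit u v ((des u).2) he h2r (Or.inr (Or.inr (Or.inl h2p))) hned2 ?_
          intro z hz hsz hcol
          rw [hc2] at hcol
          have h12 : 12 ≤ cv z := by
            have := hμle u; have := hμle ((des u).2); omega
          obtain ⟨hrz, hz2, -⟩ := hspec2 z hz h12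
          rcases hsz with h | h | h | h
          · subst h; exact absurd hu hz
          · subst h
            have := hμle u; have := hμle ((des u).1); have := hμle ((des u).2)
            omega
          · rw [h] at hz2; exact hz2
          · rw [h] at hrz; exact absurd hrz hvroot
        · refine hwit u v ((des u).1) he h1r (Or.inr (Or.inr (Or.inl h1p))) hned1 ?_
          intro z hz hsz hcol
          rw [hc1] at hcol
          have h8 : 8 ≤ cv z := by
            have := hμle u; have := hμle ((des u).1); omega
          have h12 : cv z < 12 := by
            have := hμle u; have := hμle ((des u).1); omega
          obtain ⟨hrz, hz1, -⟩ := hspec1 z hz h8 h12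
          rcases hsz with h | h | h | h
          · subst h; exact absurd hu hz
          · subst h; exact absurd hcol hcv
          · rw [h] at hz1; exact hz1
          · rw [h] at hrz; exact absurd hrz hvroot
  -- assemble
  refine ⟨c, ?_, ?_⟩
  · intro e α hce
    obtain ⟨z, hz, hfz, hval⟩ := hcSome e α hce
    subst hfz
    constructor
    · exact hHsub ((SimpleGraph.mem_edgeSet _).mpr (hpar z hz).1)
    · rw [← hval]; exact hlt16 z hz
  · intro e he
    induction e using Sym2.ind with
    | _ u v =>
      by_cases hu : u = ρ u
      · exact keyR u v he hu
      · by_cases hv : v = ρ v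
        · rw [Sym2.eq_swap] at he ⊢
          exact keyR v u he hv
        · exact keyNR u v he hu hv
end

section
/- For every integer d ≥ 0, each finite graph G can be edge-decomposed into a (d−1)-degenerate subgraph D and a subgraph H which is either empty or has minimum degree at least d, such that every edge of D is incident with at most one vertex of H. -/
open SimpleGraph

/-!
Let `C` be the `d`-core of `G`, the largest vertex set in which every vertex has at least `d`
neighbours, and split `G` into the edges `H` inside `C` and the remaining edges `D`. Then `H` has
minimum degree at least `d` and every edge of `D` leaves `C`. For `D`, any vertex set `S` not
contained in `C` has a vertex of `S \ C` with fewer than `d` neighbours in `S ∪ C`, by maximality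
of `C`; removing such vertices one at a time gives a `(d - 1)`-degenerate ordering of `D`.
-/

namespace SimpleGraph

variable {V : Type*} (G : SimpleGraph V)

def restrictTo (s : Set V) : SimpleGraph V where
  Adj u v := G.Adj u v ∧ u ∈ s ∧ v ∈ s
  symm := ⟨fun _ _ h => ⟨h.1.symm, h.2.2, h.2.1⟩⟩
  loopless := ⟨fun v h => G.loopless.irrefl v h.1⟩

lemma restrictTo_le (s : Set V) : G.restrictTo s ≤ G := fun _ _ h => h.1

lemma support_restrictTo_subset (s : Set V) : (G.restrictTo s).support ⊆ s :=
  fun _ ⟨_, h⟩ => h.2.1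

lemma neighborSet_restrictTo {s : Set V} {v : V} (hv : v ∈ s) :
    (G.restrictTo s).neighborSet v = G.neighborSet v ∩ s := by
  ext u
  simp [restrictTo, hv]

def core (d : ℕ) : Set V :=
  ⋃₀ {A | ∀ v ∈ A, d ≤ (G.neighborSet v ∩ A).ncard}

lemma subset_core {d : ℕ} {A : Set V} (hA : ∀ v ∈ A, d ≤ (G.neighborSet v ∩ A).ncard) :
    A ⊆ G.core d :=
  Set.subset_sUnion_of_mem hA

lemma le_ncard_neighborSet_inter_core [Finite V] {d : ℕ} {v : V} (hv : v ∈ G.core d) :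
    d ≤ (G.neighborSet v ∩ G.core d).ncard := by
  obtain ⟨A, hA, hvA⟩ := Set.mem_sUnion.mp hv
  exact (hA v hvA).trans
    (Set.ncard_le_ncard (Set.inter_subset_inter_right _ (G.subset_core hA)))

lemma exists_injOn_ncard_earlier_neighbors_le [Finite V] {k : ℕ}
    (h : ∀ S : Set V, S.Nonempty → ∃ v ∈ S, (G.neighborSet v ∩ S).ncard ≤ k) (S : Set V) :
    ∃ f : V → ℕ, S.InjOn f ∧ ∀ v ∈ S, {u ∈ G.neighborSet v ∩ S | f u < f v}.ncard ≤ k := by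
  classical
  induction hn : S.ncard generalizing S with
  | zero =>
    obtain rfl : S = ∅ := (Set.ncard_eq_zero).mp hn
    exact ⟨fun _ => 0, Set.injOn_empty _, fun _ hv => hv.elim⟩
  | succ n ih =>
    obtain ⟨v, hvS, hv⟩ := h S (Set.nonempty_of_ncard_ne_zero (by omega))
    obtain ⟨f, hinj, hf⟩ := ih (S \ {v}) (by rw [Set.ncard_sdiff_singleton_of_mem hvS]; omega)
    obtain ⟨M, hM⟩ := ((S \ {v}).toFinite.image f).bddAbove
    have hlt : ∀ u ∈ S, u ≠ v → f u < M + 1 := fun u hu huv =>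
      Nat.lt_succ_of_le (hM ⟨u, ⟨hu, huv⟩, rfl⟩)
    -- `v` goes last, so its earlier neighbours are all its neighbours in `S`.
    refine ⟨Function.update f v (M + 1), ?_, ?_⟩
    · intro a ha b hb hab
      by_cases hav : a = v <;> by_cases hbv : b = v <;>
        simp only [hav, hbv, Function.update_self, ne_eq, not_false_eq_true,
          Function.update_of_ne] at hab
      · exact hav.trans hbv.symm
      · exact absurd hab (hlt b hb hbv).ne'
      · exact absurd hab (hlt a ha hav).ne
      · exact hinj ⟨ha, hav⟩ ⟨hb, hbv⟩ hab
    · intro w hw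
      by_cases hwv : w = v
      · subst hwv
        exact (Set.ncard_le_ncard fun u hu => hu.1).trans hv
      refine (Set.ncard_le_ncard ?_).trans (hf w ⟨hw, hwv⟩)
      rintro u ⟨⟨hadj, huS⟩, hu⟩
      have huv : u ≠ v := by
        rintro rfl
        simp only [Function.update_self, Function.update_of_ne hwv] at hu
        exact (hlt w hw hwv).not_gt hu
      simp only [Function.update_of_ne huv, Function.update_of_ne hwv] at hu
      exact ⟨⟨hadj, huS, huv⟩, hu⟩

theorem isDegenerate_of_forall_exists_ncard_le [Finite V] {k : ℕ}
    (h : ∀ S : Set V, S.Nonempty → ∃ v ∈ S, (G.neighborSet v ∩ S).ncard ≤ k) :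
    IsDegenerate G k := by
  obtain ⟨f, hinj, hf⟩ := G.exists_injOn_ncard_earlier_neighbors_le h Set.univ
  refine ⟨⟨f, Set.injOn_univ.mp hinj⟩, fun v => ?_⟩
  simpa using hf v (Set.mem_univ v)

lemma exists_ncard_neighborSet_sdiff_restrictTo_core_le [Finite V] (d : ℕ) {S : Set V}
    (hS : S.Nonempty) :
    ∃ v ∈ S, ((G \ G.restrictTo (G.core d)).neighborSet v ∩ S).ncard ≤ d - 1 := by
  set C := G.core d
  by_cases hSC : S ⊆ C
  · obtain ⟨v, hv⟩ := hS
    refine ⟨v, hv, ?_⟩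
    suffices h : (G \ G.restrictTo C).neighborSet v ∩ S = ∅ by
      rw [h, Set.ncard_empty]
      exact Nat.zero_le _
    ext u
    simp only [Set.mem_inter_iff, mem_neighborSet, sdiff_adj, Set.mem_empty_iff_false,
      iff_false, not_and]
    exact fun ⟨hadj, hnot⟩ huS => hnot ⟨hadj, hSC hv, hSC huS⟩
  · obtain ⟨v, hvA, hv⟩ : ∃ v ∈ S ∪ C, (G.neighborSet v ∩ (S ∪ C)).ncard < d := by
      by_contra! hA
      exact hSC (Set.subset_union_left.trans (G.subset_core hA))
    have hvC : v ∉ C := fun hvC => hv.not_ge <| (G.le_ncard_neighborSet_inter_core hvC).trans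
      (Set.ncard_le_ncard (Set.inter_subset_inter_right _ Set.subset_union_right))
    refine ⟨v, hvA.resolve_right hvC, ?_⟩
    have : ((G \ G.restrictTo C).neighborSet v ∩ S).ncard ≤ (G.neighborSet v ∩ (S ∪ C)).ncard :=
      Set.ncard_le_ncard fun u hu => ⟨hu.1.1, Or.inl hu.2⟩
    omega

theorem isDegenerate_sdiff_restrictTo_core [Finite V] (d : ℕ) :
    IsDegenerate (G \ G.restrictTo (G.core d)) (d - 1) :=
  isDegenerate_of_forall_exists_ncard_le _ fun _ hS =>
    G.exists_ncard_neighborSet_sdiff_restrictTo_core_le d hS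

end SimpleGraph

theorem stmt10 {V : Type*} [Fintype V] (G : SimpleGraph V) (d : ℕ) :
    ∃ D H : SimpleGraph V, D ≤ G ∧ H ≤ G ∧
      Disjoint D.edgeSet H.edgeSet ∧ D.edgeSet ∪ H.edgeSet = G.edgeSet ∧
      IsDegenerate D (d - 1) ∧
      (∀ v ∈ H.support, d ≤ (H.neighborSet v).ncard) ∧
      (∀ u v, D.Adj u v → ¬(u ∈ H.support ∧ v ∈ H.support)) := by
  set H := G.restrictTo (G.core d)
  have hsupp := G.support_restrictTo_subset (G.core d)
  refine ⟨G \ H, H, sdiff_le, G.restrictTo_le _, ?_, ?_,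
    G.isDegenerate_sdiff_restrictTo_core d, ?_, ?_⟩
  · rw [edgeSet_sdiff]
    exact Set.disjoint_sdiff_left
  · rw [edgeSet_sdiff]
    exact Set.sdiff_union_of_subset (edgeSet_mono (G.restrictTo_le _))
  · intro v hv
    rw [G.neighborSet_restrictTo (hsupp hv)]
    exact G.le_ncard_neighborSet_inter_core (hsupp hv)
  · rintro u v ⟨hadj, hnot⟩ ⟨hu, hv⟩
    exact hnot ⟨hadj, hsupp hu, hsupp hv⟩
end

section
/- For every positive integer k and every finite graph G=(V,E), there exists an edge decomposition of G into subgraphs G₁,…,G_k such that for every vertex v ∈ V and every i ∈ [k], d_G(v)/k − 2 ≤ d_{G_i}(v) ≤ d_G(v)/k + 2. -/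
open SimpleGraph

/-!
Colour the edges with `k` colours so as to minimise `∑ᵥ ∑ᵢ dᵢ(v)²`, where `dᵢ(v)` is the
number of edges of colour `i` at `v`. If some vertex `v` had `d_a(v) ≥ d_b(v) + 3`, recolour
the connected component of `v` in the subgraph of colours `a` and `b` by a 2-colouring whose
imbalance `d_a - d_b` is at most `1` in absolute value at every vertex except `v`, where it is
at most `2`. Such a 2-colouring exists by induction on the number of edges: delete an edge `vw`,
colour the rest by induction (separately on the two sides if `vw` was a bridge) and give `vw`
the colour opposite to the sign of the imbalance left at `w`. Since
`2(x² + y²) = (x + y)² + (x - y)²` and recolouring preserves `d_a + d_b`, the potential strictly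
drops, a contradiction. So the colour degrees at a vertex lie within `2` of each other, hence
within `2` of their average `d(v)/k`.
-/

open Finset

lemma sq_le_sq_of_abs_le_one_of_even_sub {x y : ℤ} (hx : |x| ≤ 1) (hxy : Even (x - y)) :
    x ^ 2 ≤ y ^ 2 := by
  rcases eq_or_ne y 0 with rfl | hy
  · obtain ⟨r, hr⟩ := hxy
    rw [abs_le] at hx
    have hx0 : x = 0 := by omega
    simp [hx0]
  · exact ((sq_le_one_iff_abs_le_one x).2 hx).trans
      ((one_le_sq_iff_one_le_abs y).2 (Int.one_le_abs hy))

lemma abs_sub_sum_div_card_le {ι : Type*} [Fintype ι] [Nonempty ι] {x : ι → ℝ} {C : ℝ}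
    (h : ∀ i j, x i ≤ x j + C) (i : ι) :
    |x i - (∑ j, x j) / Fintype.card ι| ≤ C := by
  have hn : (0 : ℝ) < Fintype.card ι := by exact_mod_cast Fintype.card_pos
  have hle : ∑ j, x j ≤ Fintype.card ι * x i + Fintype.card ι * C := by
    simpa using sum_le_sum fun j (_ : j ∈ univ) => h j i
  have hge : Fintype.card ι * x i ≤ ∑ j, x j + Fintype.card ι * C := by
    simpa using sum_le_sum fun j (_ : j ∈ univ) => sub_le_iff_le_add.2 (h i j)
  have hup : (∑ j, x j) / Fintype.card ι ≤ x i + C := (div_le_iff₀ hn).2 (by linarith)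
  have hlow : x i - C ≤ (∑ j, x j) / Fintype.card ι := (le_div_iff₀ hn).2 (by linarith)
  rw [abs_le]
  constructor <;> linarith

namespace SimpleGraph

variable {V : Type*}

section Reachability

variable {G : SimpleGraph V}

lemma Walk.reachable_deleteEdges_or {a b : V} (p : G.Walk a b) (v w : V) :
    (G.deleteEdges {s(v, w)}).Reachable a b ∨ (G.deleteEdges {s(v, w)}).Reachable v b ∨
      (G.deleteEdges {s(v, w)}).Reachable w b := by
  induction p with
  | nil => exact .inl .rfl
  | @cons a c b hac p ih =>
    rcases ih with hcb | h
    · by_cases he : s(a, c) = s(v, w)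
      · rcases Sym2.eq_iff.1 he with ⟨rfl, rfl⟩ | ⟨rfl, rfl⟩
        · exact .inr (.inr hcb)
        · exact .inr (.inl hcb)
      · exact .inl ((deleteEdges_adj.2 ⟨hac, he⟩).reachable.trans hcb)
    · exact .inr h

lemma Reachable.deleteEdges_or {v u : V} (h : G.Reachable v u) (w : V) :
    (G.deleteEdges {s(v, w)}).Reachable v u ∨ (G.deleteEdges {s(v, w)}).Reachable w u := by
  obtain ⟨p⟩ := h
  rcases p.reachable_deleteEdges_or v w with h | h | h
  exacts [.inl h, .inl h, .inr h]

lemma reachable_of_mem_incidenceSet {u x : V} {e : Sym2 V} (he : e ∈ G.incidenceSet u)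
    (hx : x ∈ e) : G.Reachable u x := by
  obtain ⟨he, hu⟩ := he
  obtain ⟨y, rfl⟩ := Sym2.mem_iff_exists.1 hu
  rcases Sym2.mem_iff.1 hx with rfl | rfl
  exacts [.rfl, (G.mem_edgeSet.1 he).reachable]

end Reachability

open scoped Classical

section Imbalance

variable [Fintype V] {H : SimpleGraph V}

noncomputable def imbalance (H : SimpleGraph V) (χ : Sym2 V → Bool) (u : V) : ℤ :=
  ∑ e ∈ H.incidenceFinset u, if χ e then 1 else -1

lemma imbalance_eq_card_sub_card (χ : Sym2 V → Bool) (u : V) :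
    H.imbalance χ u =
      #{e ∈ H.incidenceFinset u | χ e} - #{e ∈ H.incidenceFinset u | ¬χ e} := by
  simp [imbalance, sum_ite, sub_eq_add_neg]

lemma imbalance_congr {χ χ' : Sym2 V → Bool} {u : V}
    (h : ∀ e ∈ H.incidenceSet u, χ e = χ' e) : H.imbalance χ u = H.imbalance χ' u :=
  sum_congr rfl fun e he => by rw [h e ((mem_incidenceFinset _ _ _).1 he)]

lemma imbalance_not (χ : Sym2 V → Bool) (u : V) :
    H.imbalance (fun e => !χ e) u = -H.imbalance χ u := by
  rw [imbalance, imbalance, ← sum_neg_distrib]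
  exact sum_congr rfl fun e _ => by cases χ e <;> rfl

lemma even_imbalance_sub (χ χ' : Sym2 V → Bool) (u : V) :
    Even (H.imbalance χ u - H.imbalance χ' u) := by
  rw [imbalance, imbalance, ← sum_sub_distrib]
  exact even_sum _ fun e _ => by cases χ e <;> cases χ' e <;> decide

lemma imbalance_update_of_adj {v w : V} (hvw : H.Adj v w) (χ : Sym2 V → Bool) (u : V) :
    H.imbalance (Function.update χ s(v, w) false) u =
      (H.deleteEdges {s(v, w)}).imbalance χ u - if u = v ∨ u = w then 1 else 0 := by
  have hrest : (H.deleteEdges {s(v, w)}).imbalance χ u =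
      ∑ e ∈ (H.incidenceFinset u).erase s(v, w),
        (if Function.update χ s(v, w) false e then 1 else -1 : ℤ) := by
    rw [imbalance]
    refine sum_congr ?_ fun e he => ?_
    · ext e
      simp only [mem_erase, mem_incidenceFinset, incidenceSet, edgeSet_deleteEdges,
        Set.mem_ofPred_eq, Set.mem_sdiff, Set.mem_singleton_iff]
      tauto
    · rw [Function.update_of_ne (ne_of_mem_erase he)]
  have hmem : s(v, w) ∈ H.incidenceFinset u ↔ u = v ∨ u = w := by
    simp [mem_incidenceFinset, incidenceSet, hvw, eq_comm]
  by_cases hu : u = v ∨ u = w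
  · rw [imbalance, ← add_sum_erase _ _ (hmem.2 hu), ← hrest, if_pos hu, Function.update_self]
    simp only [Bool.false_eq_true, if_false]
    ring
  · rw [imbalance, ← erase_eq_of_notMem (mt hmem.1 hu), ← hrest, if_neg hu, sub_zero]

noncomputable def componentPiecewise (H : SimpleGraph V) (v : V) (χ₁ χ₂ : Sym2 V → Bool) :
    Sym2 V → Bool :=
  fun e => if ∃ x ∈ e, H.Reachable v x then χ₁ e else χ₂ e

lemma imbalance_componentPiecewise (v : V) (χ₁ χ₂ : Sym2 V → Bool) (u : V) :
    H.imbalance (H.componentPiecewise v χ₁ χ₂) u =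
      if H.Reachable v u then H.imbalance χ₁ u else H.imbalance χ₂ u := by
  have hcomp : ∀ e ∈ H.incidenceSet u, (∃ x ∈ e, H.Reachable v x) ↔ H.Reachable v u :=
    fun e he => ⟨fun ⟨_, hx, hvx⟩ => hvx.trans (reachable_of_mem_incidenceSet he hx).symm,
      fun hvu => ⟨u, he.2, hvu⟩⟩
  split_ifs with hvu <;>
    exact imbalance_congr fun e he => by simp [componentPiecewise, hcomp e he, hvu]

end Imbalance

section Balanced

variable [Fintype V] {H : SimpleGraph V} {v w : V}

def IsBalancedAt (H : SimpleGraph V) (χ : Sym2 V → Bool) (v : V) : Prop :=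
  (∀ u ≠ v, H.Reachable v u → |H.imbalance χ u| ≤ 1) ∧ |H.imbalance χ v| ≤ 2

lemma IsBalancedAt.exists_nonneg {χ : Sym2 V → Bool} (h : H.IsBalancedAt χ v) :
    ∃ χ', H.IsBalancedAt χ' v ∧ 0 ≤ H.imbalance χ' v := by
  by_cases hv : 0 ≤ H.imbalance χ v
  · exact ⟨χ, h, hv⟩
  · refine ⟨fun e => !χ e, ?_, ?_⟩
    · simpa only [IsBalancedAt, imbalance_not, abs_neg] using h
    · rw [imbalance_not]
      linarith

lemma isBalancedAt_of_forall_not_adj (hv : ∀ w, ¬H.Adj v w) (χ : Sym2 V → Bool) :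
    H.IsBalancedAt χ v := by
  refine ⟨fun u huv ⟨p⟩ => (hv _ (Walk.adj_snd (p := p) (Walk.not_nil_of_ne huv.symm))).elim,
    ?_⟩
  have hempty : H.incidenceFinset v = ∅ := by
    refine eq_empty_of_forall_notMem fun e he => ?_
    obtain ⟨he, hve⟩ := (mem_incidenceFinset _ _ _).1 he
    obtain ⟨y, rfl⟩ := Sym2.mem_iff_exists.1 hve
    exact hv y he
  simp [imbalance, hempty]

lemma isBalancedAt_update_of_reachable_deleteEdges {χ : Sym2 V → Bool} (hvw : H.Adj v w)
    (hr : (H.deleteEdges {s(v, w)}).Reachable v w)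
    (hχ : (H.deleteEdges {s(v, w)}).IsBalancedAt χ w)
    (hχw : 0 ≤ (H.deleteEdges {s(v, w)}).imbalance χ w) :
    H.IsBalancedAt (Function.update χ s(v, w) false) v := by
  have hχv := hχ.1 v hvw.ne hr.symm
  have hχw' := hχ.2
  refine ⟨fun u huv hu => ?_, ?_⟩ <;> rw [imbalance_update_of_adj hvw]
  · by_cases huw : u = w
    · subst huw
      rw [if_pos (.inr rfl)]
      rw [abs_le] at hχw' ⊢
      omega
    · rw [if_neg (by tauto), sub_zero]
      exact hχ.1 u huw ((hu.deleteEdges_or w).elim hr.symm.trans id)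
  · rw [if_pos (.inl rfl)]
    rw [abs_le] at hχv ⊢
    omega

lemma isBalancedAt_update_of_not_reachable_deleteEdges {χ₁ χ₂ : Sym2 V → Bool}
    (hvw : H.Adj v w) (hr : ¬(H.deleteEdges {s(v, w)}).Reachable v w)
    (h₁ : (H.deleteEdges {s(v, w)}).IsBalancedAt χ₁ v)
    (h₁v : 0 ≤ (H.deleteEdges {s(v, w)}).imbalance χ₁ v)
    (h₂ : (H.deleteEdges {s(v, w)}).IsBalancedAt χ₂ w)
    (h₂w : 0 ≤ (H.deleteEdges {s(v, w)}).imbalance χ₂ w) :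
    H.IsBalancedAt
      (Function.update ((H.deleteEdges {s(v, w)}).componentPiecewise v χ₁ χ₂) s(v, w) false)
      v := by
  have h₁v' := h₁.2
  have h₂w' := h₂.2
  refine ⟨fun u huv hu => ?_, ?_⟩ <;>
    rw [imbalance_update_of_adj hvw, imbalance_componentPiecewise]
  · by_cases huw : u = w
    · subst huw
      rw [if_neg hr, if_pos (.inr rfl)]
      rw [abs_le] at h₂w' ⊢
      omega
    · rw [if_neg (show ¬(u = v ∨ u = w) by tauto), sub_zero]
      split_ifs with hvu
      · exact h₁.1 u huv hvu
      · exact h₂.1 u huw ((hu.deleteEdges_or w).resolve_left hvu)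
  · rw [if_pos .rfl, if_pos (.inl rfl)]
    rw [abs_le] at h₁v' ⊢
    omega

theorem exists_isBalancedAt (H : SimpleGraph V) (v : V) : ∃ χ, H.IsBalancedAt χ v := by
  induction H using WellFoundedLT.induction generalizing v with
  | _ H ih =>
  by_cases hv : ∃ w, H.Adj v w
  swap
  · exact ⟨fun _ => true, isBalancedAt_of_forall_not_adj (not_exists.1 hv) _⟩
  obtain ⟨w, hvw⟩ := hv
  have hlt : H.deleteEdges {s(v, w)} < H :=
    (deleteEdges_le _).lt_of_ne fun h => by
      have hvw' := hvw
      rw [← h] at hvw'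
      simp at hvw'
  by_cases hr : (H.deleteEdges {s(v, w)}).Reachable v w
  · obtain ⟨χ, hχ, hχw⟩ := (ih _ hlt w).choose_spec.exists_nonneg
    exact ⟨_, isBalancedAt_update_of_reachable_deleteEdges hvw hr hχ hχw⟩
  · obtain ⟨χ₁, h₁, h₁v⟩ := (ih _ hlt v).choose_spec.exists_nonneg
    obtain ⟨χ₂, h₂, h₂w⟩ := (ih _ hlt w).choose_spec.exists_nonneg
    exact ⟨_, isBalancedAt_update_of_not_reachable_deleteEdges hvw hr h₁ h₁v h₂ h₂w⟩

end Balanced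

theorem exists_sum_sq_imbalance_lt [Fintype V] (H : SimpleGraph V) (χ₀ : Sym2 V → Bool) {v : V}
    (hv : 3 ≤ |H.imbalance χ₀ v|) :
    ∃ χ, ∑ u, H.imbalance χ u ^ 2 < ∑ u, H.imbalance χ₀ u ^ 2 := by
  obtain ⟨χ₁, hχ₁⟩ := H.exists_isBalancedAt v
  refine ⟨H.componentPiecewise v χ₁ χ₀, sum_lt_sum (fun u _ => ?_) ⟨v, mem_univ v, ?_⟩⟩ <;>
    rw [imbalance_componentPiecewise]
  · split_ifs with hu
    · rcases eq_or_ne u v with rfl | huv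
      · exact sq_le_sq.2 (by linarith [hχ₁.2])
      · exact sq_le_sq_of_abs_le_one_of_even_sub (hχ₁.1 u huv hu) (even_imbalance_sub _ _ u)
    · exact le_rfl
  · rw [if_pos .rfl, sq_lt_sq]
    linarith [hχ₁.2]

lemma ncard_neighborSet_eq_degree [Fintype V] (G : SimpleGraph V) (v : V) :
    (G.neighborSet v).ncard = G.degree v := by
  rw [Set.ncard_eq_toFinset_card']
  rfl

section Colouring

variable {ι : Type*} {G : SimpleGraph V} {c : Sym2 V → ι}

def colourSubgraph (G : SimpleGraph V) (c : Sym2 V → ι) (s : Set ι) : SimpleGraph V :=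
  G.deleteEdges {e | c e ∉ s}

lemma colourSubgraph_adj {s : Set ι} {x y : V} :
    (G.colourSubgraph c s).Adj x y ↔ G.Adj x y ∧ c s(x, y) ∈ s := by
  simp [colourSubgraph, deleteEdges_adj]

lemma edgeSet_colourSubgraph (s : Set ι) :
    (G.colourSubgraph c s).edgeSet = G.edgeSet ∩ c ⁻¹' s := by
  ext e
  simp [colourSubgraph, edgeSet_deleteEdges]

lemma disjoint_edgeSet_colourSubgraph {s t : Set ι} (h : Disjoint s t) :
    Disjoint (G.colourSubgraph c s).edgeSet (G.colourSubgraph c t).edgeSet := by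
  rw [edgeSet_colourSubgraph, edgeSet_colourSubgraph]
  exact (h.preimage c).mono Set.inter_subset_right Set.inter_subset_right

lemma iUnion_edgeSet_colourSubgraph_singleton :
    ⋃ i, (G.colourSubgraph c {i}).edgeSet = G.edgeSet := by
  ext e
  simp [edgeSet_colourSubgraph]

noncomputable def recolour (c : Sym2 V → ι) (a b : ι) (χ : Sym2 V → Bool) : Sym2 V → ι :=
  fun e => if c e = a ∨ c e = b then (if χ e then a else b) else c e

lemma colourSubgraph_recolour_pair {a b : ι} (χ : Sym2 V → Bool) :
    G.colourSubgraph (recolour c a b χ) {a, b} = G.colourSubgraph c {a, b} := by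
  ext x y
  simp only [colourSubgraph_adj, recolour, Set.mem_insert_iff, Set.mem_singleton_iff]
  split_ifs <;> simp_all

lemma colourSubgraph_recolour_singleton {a b i : ι} (hia : i ≠ a) (hib : i ≠ b)
    (χ : Sym2 V → Bool) :
    G.colourSubgraph (recolour c a b χ) {i} = G.colourSubgraph c {i} := by
  ext x y
  simp only [colourSubgraph_adj, recolour, Set.mem_singleton_iff]
  split_ifs <;> grind

variable [Fintype V]

lemma imbalance_recolour {a b : ι} (hab : a ≠ b) (χ : Sym2 V → Bool) (u : V) :
    (G.colourSubgraph c {a, b}).imbalance (fun e => decide (recolour c a b χ e = a)) u =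
      (G.colourSubgraph c {a, b}).imbalance χ u := by
  refine imbalance_congr fun e he => ?_
  have hce : c e = a ∨ c e = b := by
    have he' := he.1
    rw [edgeSet_colourSubgraph] at he'
    exact he'.2
  cases h : χ e <;> simp [recolour, hce, hab.symm, h]

lemma incidenceFinset_colourSubgraph (s : Set ι) (u : V) :
    (G.colourSubgraph c s).incidenceFinset u = {e ∈ G.incidenceFinset u | c e ∈ s} := by
  ext e
  simp [mem_incidenceFinset, incidenceSet, edgeSet_colourSubgraph, and_right_comm]

lemma degree_colourSubgraph (s : Set ι) (u : V) :
    (G.colourSubgraph c s).degree u = #{e ∈ G.incidenceFinset u | c e ∈ s} := by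
  rw [← card_incidenceFinset_eq_degree, incidenceFinset_colourSubgraph]

lemma sum_degree_colourSubgraph_singleton [Fintype ι] (u : V) :
    ∑ i, (G.colourSubgraph c {i}).degree u = G.degree u := by
  simp only [degree_colourSubgraph, Set.mem_singleton_iff]
  rw [← card_incidenceFinset_eq_degree]
  exact (card_eq_sum_card_fiberwise fun e _ => mem_univ (c e)).symm

lemma degree_colourSubgraph_add {a b : ι} (hab : a ≠ b) (u : V) :
    (G.colourSubgraph c {a}).degree u + (G.colourSubgraph c {b}).degree u =
      (G.colourSubgraph c {a, b}).degree u := by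
  simp only [degree_colourSubgraph, Set.mem_insert_iff, Set.mem_singleton_iff]
  rw [filter_or, card_union_of_disjoint (disjoint_filter.2 fun e _ h h' => hab (h.symm.trans h'))]

lemma degree_colourSubgraph_sub {a b : ι} (hab : a ≠ b) (u : V) :
    ((G.colourSubgraph c {a}).degree u : ℤ) - (G.colourSubgraph c {b}).degree u =
      (G.colourSubgraph c {a, b}).imbalance (fun e => decide (c e = a)) u := by
  rw [imbalance_eq_card_sub_card, degree_colourSubgraph, degree_colourSubgraph,
    incidenceFinset_colourSubgraph]
  congr 3 <;> ext e <;> simp <;> grind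

lemma two_mul_sum_sq_degree_colourSubgraph [Fintype ι] {a b : ι} (hab : a ≠ b) (u : V) :
    2 * ∑ i, ((G.colourSubgraph c {i}).degree u : ℤ) ^ 2 =
      2 * ∑ i ∈ univ \ {a, b}, ((G.colourSubgraph c {i}).degree u : ℤ) ^ 2 +
        ((G.colourSubgraph c {a, b}).degree u : ℤ) ^ 2 +
        (G.colourSubgraph c {a, b}).imbalance (fun e => decide (c e = a)) u ^ 2 := by
  rw [← sum_sdiff (subset_univ {a, b}), sum_pair hab, ← degree_colourSubgraph_sub hab,
    ← degree_colourSubgraph_add hab]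
  push_cast
  ring

noncomputable def colourPotential [Fintype ι] (G : SimpleGraph V) (c : Sym2 V → ι) : ℤ :=
  ∑ u, ∑ i, ((G.colourSubgraph c {i}).degree u : ℤ) ^ 2

theorem exists_colourPotential_lt [Fintype ι] {a b : ι} {v : V}
    (h : (G.colourSubgraph c {b}).degree v + 3 ≤ (G.colourSubgraph c {a}).degree v) :
    ∃ c' : Sym2 V → ι, G.colourPotential c' < G.colourPotential c := by
  have hab : a ≠ b := by
    rintro rfl
    omega
  set H := G.colourSubgraph c {a, b}
  -- the part of the potential that recolouring the edges of `H` leaves unchanged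
  set R : V → ℤ := fun u =>
    2 * ∑ i ∈ univ \ {a, b}, ((G.colourSubgraph c {i}).degree u : ℤ) ^ 2 + (H.degree u : ℤ) ^ 2
  have hpotential : ∀ c' : Sym2 V → ι, G.colourSubgraph c' {a, b} = H →
      (∀ i ∈ univ \ {a, b}, G.colourSubgraph c' {i} = G.colourSubgraph c {i}) →
      2 * G.colourPotential c' =
        ∑ u, R u + ∑ u, H.imbalance (fun e => decide (c' e = a)) u ^ 2 := by
    intro c' hH hrest
    rw [colourPotential, mul_sum, ← sum_add_distrib]
    refine sum_congr rfl fun u _ => ?_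
    rw [two_mul_sum_sq_degree_colourSubgraph hab, hH, sum_congr rfl fun i hi => by rw [hrest i hi]]
  have hv : 3 ≤ |H.imbalance (fun e => decide (c e = a)) v| := by
    rw [← degree_colourSubgraph_sub hab]
    exact le_abs.2 (.inl (by omega))
  obtain ⟨χ, hχ⟩ := H.exists_sum_sq_imbalance_lt _ hv
  refine ⟨recolour c a b χ, ?_⟩
  have hc := hpotential c rfl fun _ _ => rfl
  have hc' := hpotential (recolour c a b χ) (colourSubgraph_recolour_pair χ) fun i hi => by
    simp only [mem_sdiff, mem_insert, mem_singleton, not_or] at hi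
    exact colourSubgraph_recolour_singleton hi.2.1 hi.2.2 χ
  simp only [H, imbalance_recolour hab] at hc'
  linarith

theorem exists_colouring_degree_le_add_two [Fintype ι] [Nonempty ι] (G : SimpleGraph V) :
    ∃ c : Sym2 V → ι, ∀ v i j,
      (G.colourSubgraph c {i}).degree v ≤ (G.colourSubgraph c {j}).degree v + 2 := by
  obtain ⟨c, hc⟩ := Finite.exists_min (G.colourPotential : (Sym2 V → ι) → ℤ)
  refine ⟨c, fun v i j => ?_⟩
  by_contra! h
  obtain ⟨c', hc'⟩ := exists_colourPotential_lt (G := G) (c := c) (v := v) (a := i) (b := j) h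
  exact (hc c').not_gt hc'

end Colouring

end SimpleGraph

theorem stmt11 {V : Type*} [Fintype V] (G : SimpleGraph V) (k : ℕ) (hk : 0 < k) :
    ∃ Gi : Fin k → SimpleGraph V, (∀ i, Gi i ≤ G) ∧
      (∀ i j, i ≠ j → Disjoint (Gi i).edgeSet (Gi j).edgeSet) ∧
      (⋃ i, (Gi i).edgeSet) = G.edgeSet ∧
      ∀ (v : V) (i : Fin k),
        ((G.neighborSet v).ncard : ℝ) / k - 2 ≤ (((Gi i).neighborSet v).ncard : ℝ) ∧
        (((Gi i).neighborSet v).ncard : ℝ) ≤ ((G.neighborSet v).ncard : ℝ) / k + 2 := by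
  classical
  have : Nonempty (Fin k) := Fin.pos_iff_nonempty.1 hk
  obtain ⟨c, hc⟩ := G.exists_colouring_degree_le_add_two (ι := Fin k)
  refine ⟨fun i => G.colourSubgraph c {i}, fun i => deleteEdges_le _,
    fun i j hij => disjoint_edgeSet_colourSubgraph (Set.disjoint_singleton.2 hij),
    iUnion_edgeSet_colourSubgraph_singleton, fun v i => ?_⟩
  have hbal := abs_sub_sum_div_card_le (x := fun j => ((G.colourSubgraph c {j}).degree v : ℝ))
    (C := 2) (fun i j => by exact_mod_cast hc v i j) i
  rw [← Nat.cast_sum, sum_degree_colourSubgraph_singleton, Fintype.card_fin] at hbal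
  simp only [ncard_neighborSet_eq_degree]
  constructor <;> linarith [abs_le.1 hbal]
end

section
/- Let G = ([n], E) be a graph with the property that every set S ⊆ [n] of size s spans at least 2ks edges, where s, k are positive integers with 2^k ≤ n/s. Then G has no closed conflict-free edge colouring and no open conflict-free edge colouring with at most k colours. -/
open SimpleGraph

open SimpleGraph

lemma edge_eq' {V : Type*} {u v : V} (huv : u ≠ v) {f : Sym2 V} (hu : u ∈ f) (hv : v ∈ f) :
    f = s(u, v) := by
  induction f using Sym2.ind with
  | _ a b =>
    rw [Sym2.mem_iff] at hu hv
    rcases hu with rfl | rfl <;> rcases hv with rfl | rfl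
    · exact absurd rfl huv
    · rfl
    · exact Sym2.eq_swap
    · exact absurd rfl huv

lemma twin_lemma {V : Type*} {G : SimpleGraph V} {c : Sym2 V → ℕ} {u v : V}
    (hadj : G.Adj u v) (hp : c '' G.incidenceSet u = c '' G.incidenceSet v)
    (f : Sym2 V) (hf : f ∈ G.edgeSet) (hmem : u ∈ f ∨ v ∈ f)
    (hne : c f ≠ c s(u, v)) :
    ∃ f', f' ≠ f ∧ f' ∈ G.edgeSet ∧ c f' = c f ∧ (u ∈ f' ∨ v ∈ f') := by
  have key : ∀ x y : V, G.Adj x y → c '' G.incidenceSet x = c '' G.incidenceSet y →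
      x ∈ f → c f ≠ c s(x, y) →
      ∃ f', f' ≠ f ∧ f' ∈ G.edgeSet ∧ c f' = c f ∧ y ∈ f' := by
    intro x y hxy hpxy hx hcne
    have hmemi : c f ∈ c '' G.incidenceSet x := ⟨f, ⟨hf, hx⟩, rfl⟩
    rw [hpxy] at hmemi
    obtain ⟨f', hf', hcf'⟩ := hmemi
    refine ⟨f', ?_, hf'.1, hcf', hf'.2⟩
    rintro rfl
    exact hcne (congrArg c (edge_eq' hxy.ne hx hf'.2))
  rcases hmem with h | h
  · obtain ⟨f', h1, h2, h3, h4⟩ := key u v hadj hp h hne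
    exact ⟨f', h1, h2, h3, Or.inr h4⟩
  · have hne' : c f ≠ c s(v, u) := by rwa [Sym2.eq_swap]
    obtain ⟨f', h1, h2, h3, h4⟩ := key v u hadj.symm hp.symm h hne'
    exact ⟨f', h1, h2, h3, Or.inl h4⟩


lemma core_lemma {n s k : ℕ} (hs : 0 < s) (hk : 0 < k) (G : SimpleGraph (Fin n))
    (hspan : ∀ S : Finset (Fin n), S.card = s →
      2 * k * s ≤ {e | e ∈ G.edgeSet ∧ ∀ v ∈ e, v ∈ S}.ncard)
    (hn : 2 ^ k * s ≤ n)
    (c : Sym2 (Fin n) → ℕ) (hc : ∀ e ∈ G.edgeSet, c e < k) :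
    ∃ u v : Fin n, G.Adj u v ∧
      c '' G.incidenceSet u = c '' G.incidenceSet v ∧
      ∃ f1 f2 : Sym2 (Fin n), f1 ≠ f2 ∧ f1 ≠ s(u, v) ∧ f2 ≠ s(u, v) ∧
        f1 ∈ G.incidenceSet v ∧ f2 ∈ G.incidenceSet v ∧
        c f1 = c s(u, v) ∧ c f2 = c s(u, v) := by
  classical
  set pal : Fin n → Finset ℕ :=
    fun v => (Finset.range k).filter (fun α => ∃ e ∈ G.incidenceSet v, c e = α) with hpal_def
  have hpal_mem : ∀ w β, β ∈ pal w ↔ ∃ e ∈ G.incidenceSet w, c e = β := by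
    intro w β
    simp only [hpal_def, Finset.mem_filter, Finset.mem_range]
    constructor
    · rintro ⟨-, h⟩; exact h
    · rintro ⟨e, he, rfl⟩; exact ⟨hc e he.1, e, he, rfl⟩
  -- pigeonhole on palettes
  obtain ⟨P, hP, hPcard⟩ := Finset.exists_le_card_fiber_of_mul_le_card_of_maps_to
    (s := (Finset.univ : Finset (Fin n))) (t := (Finset.range k).powerset) (f := pal)
    (n := s)
    (fun v _ => Finset.mem_powerset.mpr (Finset.filter_subset _ _))
    ⟨∅, Finset.empty_mem_powerset _⟩
    (by simpa [Finset.card_powerset] using hn)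
  obtain ⟨S, hSsub, hScard⟩ := Finset.exists_subset_card_eq hPcard
  have hSpal : ∀ v ∈ S, pal v = P := by
    intro v hv
    have := hSsub hv
    simp only [Finset.mem_filter] at this
    exact this.2
  -- the spanned edges
  have hESfin : {e | e ∈ G.edgeSet ∧ ∀ v ∈ e, v ∈ S}.Finite := Set.toFinite _
  set ES := hESfin.toFinset with hESdef
  have hEScard : 2 * k * s ≤ ES.card := by
    rw [← Set.ncard_eq_toFinset_card _ hESfin]; exact hspan S hScard
  have hESmem : ∀ e ∈ ES, e ∈ G.edgeSet ∧ ∀ v ∈ e, v ∈ S :=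
    fun e he => hESfin.mem_toFinset.mp he
  have hcP : ∀ e ∈ ES, c e ∈ P := by
    intro e he
    obtain ⟨heE, heS⟩ := hESmem e he
    induction e using Sym2.ind with
    | _ a b =>
      have haS : a ∈ S := heS a (Sym2.mem_mk_left a b)
      rw [← hSpal a haS, hpal_mem]
      exact ⟨s(a, b), ⟨heE, Sym2.mem_mk_left a b⟩, rfl⟩
  have hPk : P.card ≤ k := by
    have := Finset.card_le_card (Finset.mem_powerset.mp hP)
    simpa [Finset.card_range] using this
  have hPne : P.Nonempty := by
    obtain ⟨e, he⟩ := Finset.card_pos.mp (lt_of_lt_of_le (by positivity) hEScard)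
    exact ⟨c e, hcP e he⟩
  -- pigeonhole on colours
  obtain ⟨α, hα, hFcard⟩ := Finset.exists_le_card_fiber_of_mul_le_card_of_maps_to
    (f := c) (t := P) (n := 2 * s) hcP hPne
    (le_trans (by nlinarith) hEScard)
  set F := ES.filter (fun e => c e = α) with hFdef
  have hFcard' : 2 * s ≤ F.card := hFcard
  -- handshake
  have hinner : ∀ e ∈ F, (S.filter (fun v => v ∈ e)).card = 2 := by
    intro e he
    obtain ⟨heE, heS⟩ := hESmem e (Finset.mem_filter.mp he).1
    induction e using Sym2.ind with
    | _ a b =>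
      have hab : a ≠ b := (G.mem_edgeSet.mp heE).ne
      have hset : S.filter (fun v => v ∈ s(a, b)) = {a, b} := by
        ext w
        simp only [Finset.mem_filter, Sym2.mem_iff, Finset.mem_insert, Finset.mem_singleton]
        constructor
        · rintro ⟨-, h⟩; exact h
        · rintro (rfl | rfl)
          · exact ⟨heS _ (Sym2.mem_mk_left _ _), Or.inl rfl⟩
          · exact ⟨heS _ (Sym2.mem_mk_right _ _), Or.inr rfl⟩
      rw [hset, Finset.card_pair hab]
  have hdouble : ∑ v ∈ S, (F.filter (fun e => v ∈ e)).card = 2 * F.card := by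
    calc ∑ v ∈ S, (F.filter (fun e => v ∈ e)).card
        = ∑ v ∈ S, ∑ e ∈ F, if v ∈ e then 1 else 0 :=
          Finset.sum_congr rfl fun v _ => Finset.card_filter _ _
      _ = ∑ e ∈ F, ∑ v ∈ S, if v ∈ e then 1 else 0 := Finset.sum_comm
      _ = ∑ e ∈ F, (S.filter (fun v => v ∈ e)).card :=
          Finset.sum_congr rfl fun e _ => (Finset.card_filter _ _).symm
      _ = ∑ e ∈ F, 2 := Finset.sum_congr rfl hinner
      _ = 2 * F.card := by rw [Finset.sum_const, smul_eq_mul, mul_comm]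
  have hv4 : ∃ v ∈ S, 4 ≤ (F.filter (fun e => v ∈ e)).card := by
    by_contra h
    push_neg at h
    have hle : ∑ v ∈ S, (F.filter (fun e => v ∈ e)).card ≤ 3 * s := by
      calc ∑ v ∈ S, (F.filter (fun e => v ∈ e)).card ≤ ∑ _v ∈ S, 3 :=
            Finset.sum_le_sum (fun v hv => Nat.lt_succ_iff.mp (h v hv))
        _ = 3 * s := by rw [Finset.sum_const, smul_eq_mul, hScard, mul_comm]
    omega
  obtain ⟨v, hvS, hv4⟩ := hv4
  set D := F.filter (fun e => v ∈ e) with hDdef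
  obtain ⟨e0, he0⟩ := Finset.card_pos.mp (show 0 < D.card by omega)
  have he0F : e0 ∈ F := (Finset.mem_filter.mp he0).1
  have hve0 : v ∈ e0 := (Finset.mem_filter.mp he0).2
  have he0ES : e0 ∈ ES := (Finset.mem_filter.mp he0F).1
  have he0E : e0 ∈ G.edgeSet := (hESmem e0 he0ES).1
  have he0α : c e0 = α := (Finset.mem_filter.mp he0F).2
  obtain ⟨u', he0eq⟩ := Sym2.mem_iff_exists.mp hve0
  have hadj : G.Adj u' v := by
    rw [he0eq] at he0E
    exact (G.mem_edgeSet.mp he0E).symm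
  have he0eq' : e0 = s(u', v) := by rw [he0eq, Sym2.eq_swap]
  have huS : u' ∈ S := (hESmem e0 he0ES).2 u' (by rw [he0eq']; exact Sym2.mem_mk_left _ _)
  -- palettes as images
  have himg : c '' G.incidenceSet u' = c '' G.incidenceSet v := by
    ext β
    rw [Set.mem_image, Set.mem_image]
    have h1 := hpal_mem u' β
    have h2 := hpal_mem v β
    rw [hSpal u' huS] at h1
    rw [hSpal v hvS] at h2
    constructor
    · rintro ⟨e, he, rfl⟩
      obtain ⟨e', he', hc'⟩ := h2.mp (h1.mpr ⟨e, he, rfl⟩)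
      exact ⟨e', he', hc'⟩
    · rintro ⟨e, he, rfl⟩
      obtain ⟨e', he', hc'⟩ := h1.mp (h2.mpr ⟨e, he, rfl⟩)
      exact ⟨e', he', hc'⟩
  -- two extra edges at v
  have hT : 1 < (D.erase e0).card := by
    rw [Finset.card_erase_of_mem he0]; omega
  obtain ⟨f1, hf1, f2, hf2, hf12⟩ := Finset.one_lt_card.mp hT
  have hprop : ∀ f ∈ D.erase e0,
      f ≠ s(u', v) ∧ f ∈ G.incidenceSet v ∧ c f = c s(u', v) := by
    intro f hf
    have hfne : f ≠ e0 := Finset.ne_of_mem_erase hf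
    have hfD : f ∈ D := Finset.mem_of_mem_erase hf
    have hfF : f ∈ F := (Finset.mem_filter.mp hfD).1
    have hvf : v ∈ f := (Finset.mem_filter.mp hfD).2
    have hfE : f ∈ G.edgeSet := (hESmem f (Finset.mem_filter.mp hfF).1).1
    have hfα : c f = α := (Finset.mem_filter.mp hfF).2
    refine ⟨by rw [← he0eq']; exact hfne, ⟨hfE, hvf⟩, ?_⟩
    rw [← he0eq', hfα, he0α]
  obtain ⟨h1a, h1b, h1c⟩ := hprop f1 hf1
  obtain ⟨h2a, h2b, h2c⟩ := hprop f2 hf2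
  exact ⟨u', v, hadj, himg, f1, f2, hf12, h1a, h2a, h1b, h2b, h1c, h2c⟩


lemma hECN_iff {V : Type*} (G : SimpleGraph V) (u v : V) (f : Sym2 V) :
    f ∈ ECN G s(u, v) ↔ f ∈ G.edgeSet ∧ (u ∈ f ∨ v ∈ f) := by
  simp only [ECN, Set.mem_setOf_eq]
  constructor
  · rintro ⟨hf, w, hwf, hwe⟩
    rcases Sym2.mem_iff.mp hwe with rfl | rfl
    · exact ⟨hf, Or.inl hwf⟩
    · exact ⟨hf, Or.inr hwf⟩
  · rintro ⟨hf, h | h⟩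
    · exact ⟨hf, u, h, Sym2.mem_mk_left u v⟩
    · exact ⟨hf, v, h, Sym2.mem_mk_right u v⟩

lemma hEON_iff {V : Type*} (G : SimpleGraph V) (e f : Sym2 V) :
    f ∈ EON G e ↔ f ∈ ECN G e ∧ f ≠ e := by
  simp [EON]

theorem stmt14 (n s k : ℕ) (hs : 0 < s) (hk : 0 < k) (G : SimpleGraph (Fin n))
    (hspan : ∀ S : Finset (Fin n), S.card = s →
      2 * k * s ≤ {e | e ∈ G.edgeSet ∧ ∀ v ∈ e, v ∈ S}.ncard)
    (hpal : (2 : ℝ) ^ k ≤ (n : ℝ) / (s : ℝ)) :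
    (¬ ∃ c : Sym2 (Fin n) → ℕ, ClosedCF G c k) ∧
    (¬ ∃ c : Sym2 (Fin n) → ℕ, OpenCF G c k) := by
  have hn : 2 ^ k * s ≤ n := by
    have hs' : (0 : ℝ) < s := by exact_mod_cast hs
    have h := (le_div_iff₀ hs').mp hpal
    exact_mod_cast h
  constructor
  · rintro ⟨c, hcc⟩
    have hlt := hcc.1
    have hcf := hcc.2
    obtain ⟨u, v, hadj, himg, f1, f2, hf12, hf1e, hf2e, hf1i, hf2i, hcf1, hcf2⟩ :=
      core_lemma hs hk G hspan hn c hlt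
    have he : s(u, v) ∈ G.edgeSet := hadj
    obtain ⟨α, f, ⟨hfE, hfα⟩, huniq⟩ := hcf _ he
    by_cases hαe : α = c s(u, v)
    · have h1 : f1 = f :=
        huniq f1 ⟨(hECN_iff G u v f1).mpr ⟨hf1i.1, Or.inr hf1i.2⟩, by rw [hcf1, hαe]⟩
      have h2 : f2 = f :=
        huniq f2 ⟨(hECN_iff G u v f2).mpr ⟨hf2i.1, Or.inr hf2i.2⟩, by rw [hcf2, hαe]⟩
      exact hf12 (h1.trans h2.symm)
    · have hmem := (hECN_iff G u v f).mp hfE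
      obtain ⟨f', hne', hf'E, hcf', hmem'⟩ :=
        twin_lemma hadj himg f hmem.1 hmem.2 (by rw [hfα]; exact hαe)
      exact hne' (huniq f' ⟨(hECN_iff G u v f').mpr ⟨hf'E, hmem'⟩, by rw [hcf', hfα]⟩)
  · rintro ⟨c, hcc⟩
    have hlt := hcc.1
    have hcf := hcc.2
    obtain ⟨u, v, hadj, himg, f1, f2, hf12, hf1e, hf2e, hf1i, hf2i, hcf1, hcf2⟩ :=
      core_lemma hs hk G hspan hn c hlt
    have he : s(u, v) ∈ G.edgeSet := hadj
    have hf1EON : f1 ∈ EON G s(u, v) :=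
      (hEON_iff G _ f1).mpr ⟨(hECN_iff G u v f1).mpr ⟨hf1i.1, Or.inr hf1i.2⟩, hf1e⟩
    have hf2EON : f2 ∈ EON G s(u, v) :=
      (hEON_iff G _ f2).mpr ⟨(hECN_iff G u v f2).mpr ⟨hf2i.1, Or.inr hf2i.2⟩, hf2e⟩
    obtain ⟨α, f, ⟨hfE, hfα⟩, huniq⟩ := hcf _ he ⟨f1, hf1EON⟩
    obtain ⟨hfECN, hfnee⟩ := (hEON_iff G _ f).mp hfE
    by_cases hαe : α = c s(u, v)
    · have h1 : f1 = f := huniq f1 ⟨hf1EON, by rw [hcf1, hαe]⟩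
      have h2 : f2 = f := huniq f2 ⟨hf2EON, by rw [hcf2, hαe]⟩
      exact hf12 (h1.trans h2.symm)
    · have hmem := (hECN_iff G u v f).mp hfECN
      obtain ⟨f', hne', hf'E, hcf', hmem'⟩ :=
        twin_lemma hadj himg f hmem.1 hmem.2 (by rw [hfα]; exact hαe)
      have hf'ne : f' ≠ s(u, v) := by
        intro h; rw [h] at hcf'; rw [hfα] at hcf'; exact hαe hcf'.symm
      exact hne' (huniq f' ⟨(hEON_iff G _ f').mpr
        ⟨(hECN_iff G u v f').mpr ⟨hf'E, hmem'⟩, hf'ne⟩, by rw [hcf', hfα]⟩)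
end

section
/- Let c be an edge colouring of a graph G and suppose u and v are adjacent vertices with equal palettes P_u = P_v (where the palette of a vertex is the set of colours on its incident edges), and suppose the colour of edge uv appears on at least 2 edges incident with v other than uv. Then no colour appears exactly once in the open neighbourhood E(uv), and no colour appears exactly once in the closed neighbourhood E[uv]; in particular c is neither open nor closed conflict-free at the edge uv. -/
open SimpleGraph

theorem stmt16 {V : Type*} (G : SimpleGraph V) (c : Sym2 V → ℕ) (u v : V)
    (huv : G.Adj u v)
    (hpal : c '' (G.incidenceSet u) = c '' (G.incidenceSet v))
    (hrep : 2 ≤ {f | f ∈ G.incidenceSet v ∧ f ≠ s(u, v) ∧ c f = c s(u, v)}.ncard) :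
    (¬ ∃ α, ∃! f, f ∈ EON G s(u, v) ∧ c f = α) ∧
    (¬ ∃ α, ∃! f, f ∈ ECN G s(u, v) ∧ c f = α) := by
  set e : Sym2 V := s(u, v) with he
  have hne : u ≠ v := huv.ne
  -- helper: edges in incidence sets of u or v, ≠ e, are in EON
  have hEONu : ∀ f ∈ G.incidenceSet u, f ≠ e → f ∈ EON G e := by
    rintro f ⟨hf1, hf2⟩ hfe
    exact ⟨⟨hf1, u, hf2, Sym2.mem_mk_left u v⟩, hfe⟩
  have hEONv : ∀ f ∈ G.incidenceSet v, f ≠ e → f ∈ EON G e := by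
    rintro f ⟨hf1, hf2⟩ hfe
    exact ⟨⟨hf1, v, hf2, Sym2.mem_mk_right u v⟩, hfe⟩
  -- the set from hrep is finite and has two distinct elements
  set S := {f | f ∈ G.incidenceSet v ∧ f ≠ e ∧ c f = c e} with hS
  have hfin : S.Finite := by
    by_contra h
    rw [Set.Infinite.ncard h] at hrep
    omega
  obtain ⟨g1, g2, hg1, hg2, hg12⟩ := (Set.one_lt_ncard_iff hfin).mp hrep
  -- key lemma: every f in ECN has a distinct same-coloured partner in EON
  have key : ∀ f ∈ ECN G e, ∃ g ∈ EON G e, g ≠ f ∧ c g = c f := by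
    rintro f ⟨hfE, w, hwf, hwe⟩
    by_cases hcf : c f = c e
    · -- use the two edges from hrep
      rcases eq_or_ne g1 f with rfl | h1
      · exact ⟨g2, hEONv g2 hg2.1 hg2.2.1, Ne.symm hg12, hg2.2.2.trans hcf.symm⟩
      · exact ⟨g1, hEONv g1 hg1.1 hg1.2.1, h1, hg1.2.2.trans hcf.symm⟩
    · have hfe : f ≠ e := fun h => hcf (by rw [h])
      have hwuv : w = u ∨ w = v := by
        rw [he, Sym2.mem_iff] at hwe; exact hwe
      rcases hwuv with rfl | rfl
      · -- f incident with u; find partner at v via palettes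
        have : c f ∈ c '' (G.incidenceSet v) := by
          rw [← hpal]; exact ⟨f, ⟨hfE, hwf⟩, rfl⟩
        obtain ⟨g, hg, hgc⟩ := this
        have hge : g ≠ e := fun h => hcf (by rw [← hgc, h])
        have hgf : g ≠ f := by
          rintro rfl
          exact hge ((Sym2.mem_and_mem_iff hne).mp ⟨hwf, hg.2⟩)
        exact ⟨g, hEONv g hg hge, hgf, hgc⟩
      · -- f incident with v; find partner at u
        have : c f ∈ c '' (G.incidenceSet u) := by
          rw [hpal]; exact ⟨f, ⟨hfE, hwf⟩, rfl⟩
        obtain ⟨g, hg, hgc⟩ := this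
        have hge : g ≠ e := fun h => hcf (by rw [← hgc, h])
        have hgf : g ≠ f := by
          rintro rfl
          exact hge ((Sym2.mem_and_mem_iff hne).mp ⟨hg.2, hwf⟩)
        exact ⟨g, hEONu g hg hge, hgf, hgc⟩
  constructor
  · rintro ⟨α, f, ⟨hfEON, hfc⟩, huniq⟩
    obtain ⟨g, hgEON, hgf, hgc⟩ := key f hfEON.1
    exact hgf (huniq g ⟨hgEON, hgc.trans hfc⟩)
  · rintro ⟨α, f, ⟨hfECN, hfc⟩, huniq⟩
    obtain ⟨g, hgEON, hgf, hgc⟩ := key f hfECN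
    exact hgf (huniq g ⟨hgEON.1, hgc.trans hfc⟩)
end

section
/- Let G be a connected graph with at least two edges and let a proper vertex colouring of G with colours in [β] (β even) be chosen so as to maximise the number of edges between X, the set of vertices with colours in [β/2], and Y, the complement set. Then the bipartite graph G[X,Y] formed by the edges between X and Y contains no isolated edge. -/
open SimpleGraph

/-- The set of edges of `G` joining the colour classes `[β/2]` and its complement
under the colouring `ψ`. -/
def crossEdges {V : Type*} (G : SimpleGraph V) (β : ℕ) (ψ : V → ℕ) : Set (Sym2 V) :=
  {e | e ∈ G.edgeSet ∧ ∃ x y, e = s(x, y) ∧ ψ x < β / 2 ∧ β / 2 ≤ ψ y}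

theorem stmt18 {V : Type*} [Fintype V] (G : SimpleGraph V) (hconn : G.Connected)
    (h2 : 2 ≤ G.edgeSet.ncard) (β : ℕ) (hβ : Even β)
    (φ : V → ℕ) (hφ : ∀ v, φ v < β) (hproper : ∀ u v, G.Adj u v → φ u ≠ φ v)
    (hmax : ∀ ψ : V → ℕ, (∀ v, ψ v < β) → (∀ u v, G.Adj u v → ψ u ≠ ψ v) →
      (crossEdges G β ψ).ncard ≤ (crossEdges G β φ).ncard) :
    ∀ e ∈ crossEdges G β φ, ∃ f ∈ crossEdges G β φ, f ≠ e ∧ ∃ w, w ∈ e ∧ w ∈ f := by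
  classical
  intro e he
  by_contra hiso
  push_neg at hiso
  obtain ⟨heE, x, y, rfl, hx, hy⟩ := he
  obtain ⟨m, rfl⟩ := hβ
  have hm2 : (m + m) / 2 = m := by omega
  rw [hm2] at hx hy
  have hAdj : G.Adj x y := by rwa [SimpleGraph.mem_edgeSet] at heE
  have hxy : x ≠ y := hAdj.ne
  have hm1 : 1 ≤ m := by omega
  -- every neighbour of x other than y has low colour
  have hlowx : ∀ w, G.Adj x w → w ≠ y → φ w < m := by
    intro w hw hwy
    by_contra hcon
    push_neg at hcon
    have hmem : s(x, w) ∈ crossEdges G (m + m) φ :=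
      ⟨G.mem_edgeSet.mpr hw, x, w, rfl, by omega, by omega⟩
    have hne : s(x, w) ≠ s(x, y) := by
      intro h
      rw [Sym2.congr_right] at h
      exact hwy h
    exact hiso _ hmem hne x (Sym2.mem_mk_left x y) (Sym2.mem_mk_left x w)
  -- every neighbour of y other than x has high colour
  have hhighy : ∀ w, G.Adj y w → w ≠ x → m ≤ φ w := by
    intro w hw hwx
    by_contra hcon
    push_neg at hcon
    have hmem : s(y, w) ∈ crossEdges G (m + m) φ :=
      ⟨G.mem_edgeSet.mpr hw, w, y, Sym2.eq_swap, by omega, by omega⟩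
    have hne : s(y, w) ≠ s(x, y) := by
      intro h
      rw [Sym2.eq_iff] at h
      rcases h with ⟨h1, _⟩ | ⟨_, h2⟩
      · exact hxy h1.symm
      · exact hwx h2
    exact hiso _ hmem hne y (Sym2.mem_mk_right x y) (Sym2.mem_mk_left y w)
  -- x or y has another neighbour
  have hz : (∃ z, G.Adj x z ∧ z ≠ y) ∨ (∃ z, G.Adj y z ∧ z ≠ x) := by
    by_contra hcon
    push_neg at hcon
    obtain ⟨h1, h2⟩ := hcon
    have key : ∀ (u v : V) (w : G.Walk u v), (u = x ∨ u = y) → (v = x ∨ v = y) := by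
      intro u v w
      induction w with
      | nil => exact id
      | cons h p ih =>
        intro hu
        apply ih
        rcases hu with rfl | rfl
        · exact Or.inr (h1 _ h)
        · exact Or.inl (h2 _ h)
    have hVxy : ∀ v : V, v = x ∨ v = y := by
      intro v
      obtain ⟨w⟩ := hconn.preconnected x v
      exact key x v w (Or.inl rfl)
    have hsub : G.edgeSet ⊆ {s(x, y)} := by
      intro f hf
      induction f with
      | h a b =>
        rw [SimpleGraph.mem_edgeSet] at hf
        rcases hVxy a with rfl | rfl <;> rcases hVxy b with rfl | rfl
        · exact absurd rfl hf.ne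
        · rfl
        · exact Sym2.eq_swap
        · exact absurd rfl hf.ne
    have := Set.ncard_le_ncard hsub (Set.finite_singleton _)
    rw [Set.ncard_singleton] at this
    omega
  -- the recolouring
  set ψ : V → ℕ := fun v => if v = x then m else if v = y then 0 else φ v with hψdef
  have hψx : ψ x = m := by simp [hψdef]
  have hψy : ψ y = 0 := by simp [hψdef, hxy.symm]
  have hψo : ∀ v, v ≠ x → v ≠ y → ψ v = φ v := by
    intro v h1 h2; simp [hψdef, h1, h2]
  have hψlt : ∀ v, ψ v < m + m := by
    intro v
    by_cases h1 : v = x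
    · subst h1; rw [hψx]; omega
    by_cases h2 : v = y
    · subst h2; rw [hψy]; omega
    · rw [hψo v h1 h2]; exact hφ v
  have hψproper : ∀ u v, G.Adj u v → ψ u ≠ ψ v := by
    have main : ∀ u v, G.Adj u v → ψ u < ψ v ∨ ψ v < ψ u ∨ (u ≠ x ∧ u ≠ y ∧ v ≠ x ∧ v ≠ y) := by
      intro u v huv
      by_cases h1 : u = x
      · subst h1
        by_cases h2 : v = y
        · subst h2; rw [hψx, hψy]; right; left; omega
        · rw [hψx, hψo v huv.ne' h2]
          right; left; exact hlowx v huv h2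
      by_cases h2 : u = y
      · subst h2
        by_cases h3 : v = x
        · subst h3; rw [hψx, hψy]; left; omega
        · rw [hψy, hψo v h3 huv.ne']
          left; have := hhighy v huv h3; omega
      by_cases h3 : v = x
      · subst h3
        rw [hψx, hψo u h1 h2]
        left; exact hlowx u huv.symm h2
      by_cases h4 : v = y
      · subst h4
        rw [hψy, hψo u h1 h2]
        right; left; have := hhighy u huv.symm h1; omega
      · right; right; exact ⟨h1, h2, h3, h4⟩
    intro u v huv
    rcases main u v huv with h | h | ⟨h1, h2, h3, h4⟩
    · omega
    · omega
    · rw [hψo u h1 h2, hψo v h3 h4]; exact hproper u v huv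
  -- cross edges of φ are cross edges of ψ
  have hsub : crossEdges G (m + m) φ ⊆ crossEdges G (m + m) ψ := by
    intro f hf
    obtain ⟨hfE, a, b, hfab, ha, hb⟩ := hf
    rw [hm2] at ha hb
    by_cases hfe : f = s(x, y)
    · subst hfe
      refine ⟨heE, y, x, Sym2.eq_swap, ?_, ?_⟩ <;> rw [hm2]
      · rw [hψy]; omega
      · rw [hψx]
    · have hxf : x ∉ f := hiso f ⟨hfE, a, b, hfab, by omega, by omega⟩ hfe x (Sym2.mem_mk_left x y)
      have hyf : y ∉ f := hiso f ⟨hfE, a, b, hfab, by omega, by omega⟩ hfe y (Sym2.mem_mk_right x y)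
      subst hfab
      have hax : a ≠ x := fun h => hxf (h ▸ Sym2.mem_mk_left a b)
      have hay : a ≠ y := fun h => hyf (h ▸ Sym2.mem_mk_left a b)
      have hbx : b ≠ x := fun h => hxf (h ▸ Sym2.mem_mk_right a b)
      have hby : b ≠ y := fun h => hyf (h ▸ Sym2.mem_mk_right a b)
      exact ⟨hfE, a, b, rfl, by rw [hm2, hψo a hax hay]; exact ha,
        by rw [hm2, hψo b hbx hby]; exact hb⟩
  -- an extra cross edge of ψ
  have hextra : ∃ f0, f0 ∈ crossEdges G (m + m) ψ ∧ f0 ∉ crossEdges G (m + m) φ := by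
    rcases hz with ⟨z, hxz, hzy⟩ | ⟨z, hyz, hzx⟩
    · refine ⟨s(x, z), ⟨G.mem_edgeSet.mpr hxz, z, x, Sym2.eq_swap, ?_, ?_⟩, ?_⟩
      · rw [hm2, hψo z hxz.ne' hzy]; exact hlowx z hxz hzy
      · rw [hm2, hψx]
      · intro hmem
        have hne : s(x, z) ≠ s(x, y) := by
          intro h; rw [Sym2.congr_right] at h; exact hzy h
        exact hiso _ hmem hne x (Sym2.mem_mk_left x y) (Sym2.mem_mk_left x z)
    · refine ⟨s(y, z), ⟨G.mem_edgeSet.mpr hyz, y, z, rfl, ?_, ?_⟩, ?_⟩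
      · rw [hm2, hψy]; omega
      · rw [hm2, hψo z hzx hyz.ne']; exact hhighy z hyz hzx
      · intro hmem
        have hne : s(y, z) ≠ s(x, y) := by
          intro h
          rw [Sym2.eq_iff] at h
          rcases h with ⟨h1, _⟩ | ⟨_, h2⟩
          · exact hxy h1.symm
          · exact hzx h2
        exact hiso _ hmem hne y (Sym2.mem_mk_right x y) (Sym2.mem_mk_left y z)
  obtain ⟨f0, hf0, hf0n⟩ := hextra
  have hss : crossEdges G (m + m) φ ⊂ crossEdges G (m + m) ψ :=
    ⟨hsub, fun h => hf0n (h hf0)⟩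
  have hlt := Set.ncard_lt_ncard hss (Set.toFinite _)
  have := hmax ψ hψlt hψproper
  omega
end
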